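/- arXiv:1102.5380 — 3 statements merged into one kernel-verified Lean document; each statement's English description precedes it below -/
import Mathlib

section
/- Let (a^k)_k and (b^k)_k be two a.e. monotone sequences of vectors with all entries in [0,1]. If (a^k, b^k)_k is μ-distributed for some probability measure μ on I² = [0,1]², then for every continuous function φ on [−3,3], lim_{k→∞} (1/k)·Trace[φ(J(a^k,b^k))] = (1/π) ∫_{I²} ∫_0^π φ(x + 2y·cos t) dt dμ(x,y). -/
/-!
The eigenvalues of `J(aᵏ, bᵏ)` lie in `[-3, 3]` (Gershgorin), so by Weierstrass approximation it
suffices to take `φ(x) = xⁿ`, i.e. to find the limit of `Trace(Jⁿ) / k`. Extended by zero to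
`ℤ × ℤ`, the diagonal entry `(Jⁿ)ⱼⱼ` only depends on the coefficients within distance `n` of `j`;
freezing them at `(aⱼ, bⱼ)` gives a constant (Toeplitz) kernel, whose diagonal entries are
`(1/π) ∫₀^π (aⱼ + 2 bⱼ cos t)ⁿ dt`. The error is at most `n 3ⁿ` times the local variation of the
coefficients near `j`; summed over `j`, these local variations are at most `2n` times the total
variation, which is `o(k)` because a vector with entries in `[0,1]` varies by at most
`1 + 2 · #descents`. The `μ`-distribution of `(aᵏ, bᵏ)` then gives the limit of the frozen sums.
-/

open Filter MeasureTheory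

noncomputable section

/-- The `k × k` Jacobi (real symmetric tridiagonal) matrix with diagonal entries
`a 0, …, a (k-1)` and sub/super-diagonal entries `b 0, …, b (k-2)` (0-indexed). -/
def jacobiMatrix (k : ℕ) (a b : ℕ → ℝ) : Matrix (Fin k) (Fin k) ℝ :=
  Matrix.of fun i j =>
    if (i : ℕ) = (j : ℕ) then a i
    else if (i : ℕ) + 1 = (j : ℕ) then b i
    else if (j : ℕ) + 1 = (i : ℕ) then b j
    else 0

theorem jacobiMatrix_isHermitian (k : ℕ) (a b : ℕ → ℝ) :
    (jacobiMatrix k a b).IsHermitian := by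
  show _ = _
  ext i j
  simp only [Matrix.conjTranspose_apply, jacobiMatrix, Matrix.of_apply, star_trivial]
  by_cases h1 : (i : ℕ) = (j : ℕ)
  · have h : i = j := Fin.ext h1
    subst h
    rfl
  · have h1' : ¬ (j : ℕ) = (i : ℕ) := fun h => h1 h.symm
    by_cases h2 : (i : ℕ) + 1 = (j : ℕ)
    · have h3 : ¬ (j : ℕ) + 1 = (i : ℕ) := by omega
      simp [h1, h1', h2, h3]
    · by_cases h3 : (j : ℕ) + 1 = (i : ℕ) <;> simp [h1, h1', h2, h3]

/-- `Trace[φ(J(a,b))] = ∑ⱼ φ(λⱼ)`, the sum of `φ` over the eigenvalues of the Jacobi matrix. -/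
def jacobiTrace (k : ℕ) (a b : ℕ → ℝ) (φ : ℝ → ℝ) : ℝ :=
  ∑ i, φ ((jacobiMatrix_isHermitian k a b).eigenvalues i)

/-- The class `𝒮`: small deviations `∑ᵢ |a_{i+1}^k − a_i^k| = o(k)` and entries in `[0,1]`. -/
def MemS (a : ℕ → ℕ → ℝ) : Prop :=
  ((fun k : ℕ => ∑ i ∈ Finset.range (k - 1), |a k (i + 1) - a k i|)
      =o[Filter.atTop] fun k : ℕ => (k : ℝ)) ∧
  ∀ k : ℕ, ∀ i < k, a k i ∈ Set.Icc (0 : ℝ) 1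

/-- The class `𝒮′`: for every `δ ∈ (0,1)`, `∑ᵢ |a_{i+1}^k − a_i^k| = O(k^{1−δ})`, and
`maxᵢ |a_i^k| = O(log k)`. -/
def MemS' (a : ℕ → ℕ → ℝ) : Prop :=
  (∀ δ : ℝ, δ ∈ Set.Ioo (0 : ℝ) 1 →
    ((fun k : ℕ => ∑ i ∈ Finset.range (k - 1), |a k (i + 1) - a k i|)
        =O[Filter.atTop] fun k : ℕ => (k : ℝ) ^ (1 - δ))) ∧
  ∃ C : ℝ, ∀ᶠ k : ℕ in Filter.atTop, ∀ i < k, |a k i| ≤ C * Real.log k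

/-- `μ`-distributed on `I² = [0,1]²`. -/
def MuDistributedI (a b : ℕ → ℕ → ℝ) (μ : Measure (ℝ × ℝ)) : Prop :=
  ∀ ψ : ℝ × ℝ → ℝ, ContinuousOn ψ (Set.Icc (0 : ℝ) 1 ×ˢ Set.Icc (0 : ℝ) 1) →
    Filter.Tendsto (fun k : ℕ => (1 / (k : ℝ)) * ∑ j ∈ Finset.range k, ψ (a k j, b k j))
      Filter.atTop (nhds (∫ p, ψ p ∂μ))

/-- `μ`-distributed on `ℝ²` (test functions: bounded continuous). -/
def MuDistributedR (a b : ℕ → ℕ → ℝ) (μ : Measure (ℝ × ℝ)) : Prop :=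
  ∀ ψ : ℝ × ℝ → ℝ, Continuous ψ → (∃ C : ℝ, ∀ p, |ψ p| ≤ C) →
    Filter.Tendsto (fun k : ℕ => (1 / (k : ℝ)) * ∑ j ∈ Finset.range k, ψ (a k j, b k j))
      Filter.atTop (nhds (∫ p, ψ p ∂μ))

/-- Tightness via closed bounded rectangles. -/
def TightRect (μ : Measure (ℝ × ℝ)) : Prop :=
  ∀ ε : ℝ, 0 < ε → ∃ x₁ x₂ y₁ y₂ : ℝ,
    μ ((Set.Icc x₁ x₂ ×ˢ Set.Icc y₁ y₂)ᶜ) < ENNReal.ofReal ε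

/-- Almost everywhere increasing sequence of vectors. -/
def AEIncreasing (a : ℕ → ℕ → ℝ) : Prop :=
  Filter.Tendsto
    (fun k : ℕ => (((Finset.range (k - 1)).filter fun i => a k i ≤ a k (i + 1)).card : ℝ) / k)
    Filter.atTop (nhds 1)

/-- Almost everywhere decreasing sequence of vectors. -/
def AEDecreasing (a : ℕ → ℕ → ℝ) : Prop :=
  Filter.Tendsto
    (fun k : ℕ => (((Finset.range (k - 1)).filter fun i => a k (i + 1) ≤ a k i).card : ℝ) / k)
    Filter.atTop (nhds 1)

/-- Almost everywhere monotone sequence of vectors. -/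
def AEMonotone (a : ℕ → ℕ → ℝ) : Prop :=
  AEIncreasing a ∨ AEDecreasing a

namespace Matrix.IsHermitian

variable {𝕜 n : Type*} [RCLike 𝕜] [Fintype n] [DecidableEq n] {A : Matrix n n 𝕜}

theorem trace_pow_eq_sum_pow_eigenvalues (hA : A.IsHermitian) (m : ℕ) :
    (A ^ m).trace = ∑ i, (hA.eigenvalues i : 𝕜) ^ m := by
  conv_lhs => rw [hA.spectral_theorem]
  rw [← map_pow, Unitary.conjStarAlgAut_apply, trace_mul_cycle,
    Unitary.coe_star_mul_self, Matrix.one_mul, diagonal_pow, trace_diagonal]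
  rfl

theorem exists_abs_eigenvalue_sub_le {B : Matrix n n ℝ} (hB : B.IsHermitian) (i : n) :
    ∃ l, |hB.eigenvalues i - B l l| ≤ ∑ j ∈ Finset.univ.erase l, |B l j| := by
  have hev : Module.End.HasEigenvalue (toLin' B) (hB.eigenvalues i) :=
    Module.End.hasEigenvalue_iff_mem_spectrum.mpr <| by
      rw [spectrum_toLin', hB.spectrum_real_eq_range_eigenvalues]
      exact ⟨i, rfl⟩
  simpa [Real.dist_eq] using eigenvalue_mem_ball hev

end Matrix.IsHermitian

theorem sum_boole_le_one {ι : Type*} (s : Finset ι) (P : ι → Prop) [DecidablePred P]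
    (hP : ∀ x y, P x → P y → x = y) : ∑ j ∈ s, (if P j then (1 : ℝ) else 0) ≤ 1 := by
  rw [Finset.sum_boole]
  exact_mod_cast Finset.card_le_one.mpr fun x hx y hy =>
    hP x y (Finset.mem_filter.mp hx).2 (Finset.mem_filter.mp hy).2

theorem abs_le_one_of_mem_Icc {x : ℝ} (hx : x ∈ Set.Icc (0 : ℝ) 1) : |x| ≤ 1 :=
  abs_le.mpr ⟨by linarith [hx.1], hx.2⟩

theorem jacobiMatrix_offDiag_abs_le {k : ℕ} {a b : ℕ → ℝ} (hb : ∀ i < k, |b i| ≤ 1)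
    {i j : Fin k} (hij : j ≠ i) :
    |jacobiMatrix k a b i j| ≤
      (if (i : ℕ) + 1 = j then 1 else 0) + (if (j : ℕ) + 1 = i then 1 else 0) := by
  have hij' : (i : ℕ) ≠ j := fun h => hij (Fin.ext h.symm)
  simp only [jacobiMatrix, Matrix.of_apply, if_neg hij']
  split_ifs <;> norm_num <;> first | omega | exact hb _ (by omega)

theorem jacobiMatrix_eigenvalues_mem_Icc {k : ℕ} {a b : ℕ → ℝ}
    (ha : ∀ i < k, |a i| ≤ 1) (hb : ∀ i < k, |b i| ≤ 1) (i : Fin k) :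
    (jacobiMatrix_isHermitian k a b).eigenvalues i ∈ Set.Icc (-3 : ℝ) 3 := by
  obtain ⟨l, hl⟩ := (jacobiMatrix_isHermitian k a b).exists_abs_eigenvalue_sub_le i
  have hrow : ∑ j ∈ Finset.univ.erase l, |jacobiMatrix k a b l j| ≤ 2 := by
    calc _ ≤ ∑ j ∈ Finset.univ.erase l,
          ((if (l : ℕ) + 1 = j then (1 : ℝ) else 0) + (if (j : ℕ) + 1 = l then 1 else 0)) :=
          Finset.sum_le_sum fun j hj => jacobiMatrix_offDiag_abs_le hb (Finset.ne_of_mem_erase hj)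
      _ ≤ 1 + 1 := by
          rw [Finset.sum_add_distrib]
          gcongr <;> exact sum_boole_le_one _ _ fun x y hx hy => Fin.ext (by omega)
      _ = 2 := by norm_num
  rw [show jacobiMatrix k a b l l = a l by simp [jacobiMatrix]] at hl
  have hal := abs_le.mp (ha l l.isLt)
  rw [Set.mem_Icc]
  constructor <;> linarith [abs_le.mp (hl.trans hrow)]

def triWeight (α β : ℤ → ℝ) (p q : ℤ) : ℝ :=
  if p = q then α p else if p + 1 = q then β p else if q + 1 = p then β q else 0

theorem abs_triWeight_le_one {α β : ℤ → ℝ} (hα : ∀ z, |α z| ≤ 1) (hβ : ∀ z, |β z| ≤ 1)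
    (p q : ℤ) : |triWeight α β p q| ≤ 1 := by
  simp only [triWeight]
  split_ifs <;> simp [hα, hβ]

/-- The entries of `wⁿ` for a tridiagonal kernel `w` on `ℤ × ℤ`: the row-by-column sum only runs
over `j - 1, j, j + 1`. -/
def triPow (w : ℤ → ℤ → ℝ) : ℕ → ℤ → ℤ → ℝ
  | 0, i, j => if i = j then 1 else 0
  | n + 1, i, j =>
    triPow w n i (j - 1) * w (j - 1) j + triPow w n i j * w j j + triPow w n i (j + 1) * w (j + 1) j

section triPow

variable {w w' : ℤ → ℤ → ℝ}

theorem abs_triPow_le (hw : ∀ p q, |w p q| ≤ 1) (n : ℕ) (i j : ℤ) :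
    |triPow w n i j| ≤ 3 ^ n := by
  induction n generalizing j with
  | zero => simp only [triPow]; split_ifs <;> simp
  | succ n ih =>
    have hterm : ∀ l, |triPow w n i l * w l j| ≤ 3 ^ n := fun l => by
      rw [abs_mul]
      exact (mul_le_of_le_one_right (abs_nonneg _) (hw l j)).trans (ih l)
    calc |triPow w (n + 1) i j| ≤ 3 ^ n + 3 ^ n + 3 ^ n :=
          (abs_add_three _ _ _).trans (add_le_add_three (hterm _) (hterm _) (hterm _))
      _ = 3 ^ (n + 1) := by ring

theorem abs_triPow_sub_triPow_le (hw : ∀ p q, |w p q| ≤ 1) (hw' : ∀ p q, |w' p q| ≤ 1)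
    {ε : ℝ} (n : ℕ) (i j : ℤ)
    (hε : ∀ p q, |p - j| ≤ n → |q - j| ≤ n → |w p q - w' p q| ≤ ε) :
    |triPow w n i j - triPow w' n i j| ≤ n * 3 ^ n * ε := by
  induction n generalizing j with
  | zero => simp [triPow]
  | succ n ih =>
    have hterm : ∀ l, |l - j| ≤ 1 →
        |triPow w n i l * w l j - triPow w' n i l * w' l j| ≤ n * 3 ^ n * ε + 3 ^ n * ε := by
      intro l hl
      have h1 := ih l fun p q hp hq => hε p q (by push_cast; rw [abs_le] at *; omega)
        (by push_cast; rw [abs_le] at *; omega)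
      have h2 := hε l j (by push_cast; omega) (by simp; positivity)
      calc _ = |(triPow w n i l - triPow w' n i l) * w l j
              + triPow w' n i l * (w l j - w' l j)| := by ring_nf
        _ ≤ |triPow w n i l - triPow w' n i l| * |w l j|
              + |triPow w' n i l| * |w l j - w' l j| := by
            rw [← abs_mul, ← abs_mul]; exact abs_add_le _ _
        _ ≤ n * 3 ^ n * ε + 3 ^ n * ε := add_le_add
            ((mul_le_of_le_one_right (abs_nonneg _) (hw l j)).trans h1)
            (mul_le_mul (abs_triPow_le hw' n i l) h2 (abs_nonneg _) (by positivity))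
    calc |triPow w (n + 1) i j - triPow w' (n + 1) i j|
        ≤ 3 * (n * 3 ^ n * ε + 3 ^ n * ε) := by
          have h₁ := abs_le.mp (hterm (j - 1) (by simp))
          have h₂ := abs_le.mp (hterm j (by simp))
          have h₃ := abs_le.mp (hterm (j + 1) (by simp))
          simp only [triPow]
          rw [abs_le]
          constructor <;> linarith
      _ = (n + 1 : ℕ) * 3 ^ (n + 1) * ε := by push_cast; ring

end triPow

theorem sum_fin_eq_sum_Ico_int {M : Type*} [AddCommMonoid M] (k : ℕ) (g : ℤ → M) :
    ∑ l : Fin k, g l = ∑ z ∈ Finset.Ico (0 : ℤ) k, g z := by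
  rw [Fin.sum_univ_eq_sum_range (fun m => g m), Int.Ico_eq_finset_map, Finset.sum_map]
  simp

theorem sum_Icc_sub_one_add_one {M : Type*} [AddCommMonoid M] (g : ℤ → M) (j : ℤ) :
    ∑ z ∈ Finset.Icc (j - 1) (j + 1), g z = g (j - 1) + g j + g (j + 1) := by
  have : Finset.Icc (j - 1) (j + 1) = {j - 1, j, j + 1} := by ext; simp; omega
  rw [this, Finset.sum_insert (by simp only [Finset.mem_insert, Finset.mem_singleton]; omega),
    Finset.sum_insert (by simp), Finset.sum_singleton, add_assoc]

theorem sum_fin_eq_three_of_eq_zero {k : ℕ} (g : ℤ → ℝ) (j : ℤ)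
    (hk : ∀ z : ℤ, ¬ (0 ≤ z ∧ z < k) → g z = 0)
    (hj : ∀ z, ¬ (j - 1 ≤ z ∧ z ≤ j + 1) → g z = 0) :
    ∑ l : Fin k, g l = g (j - 1) + g j + g (j + 1) := by
  rw [sum_fin_eq_sum_Ico_int, ← sum_Icc_sub_one_add_one,
    Finset.sum_subset (Finset.subset_union_left (s₂ := Finset.Icc (j - 1) (j + 1))),
    ← Finset.sum_subset (Finset.subset_union_right (s₁ := Finset.Ico (0 : ℤ) k))]
  · intro z _ hz; exact hj z (by simpa using hz)
  · intro z _ hz; exact hk z (by simpa using hz)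

def extendByZero (k : ℕ) (a : ℕ → ℝ) (z : ℤ) : ℝ :=
  if 0 ≤ z ∧ z < k then a z.toNat else 0

theorem extendByZero_natCast {k : ℕ} (c : ℕ → ℝ) {i : ℕ} (hi : i < k) :
    extendByZero k c i = c i := by
  simp [extendByZero, hi]

theorem extendByZero_of_not_mem {k : ℕ} (c : ℕ → ℝ) {z : ℤ} (hz : ¬ (0 ≤ z ∧ z < k)) :
    extendByZero k c z = 0 :=
  if_neg hz

theorem abs_extendByZero_le {k : ℕ} {c : ℕ → ℝ} (hc : ∀ i < k, |c i| ≤ 1) (z : ℤ) :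
    |extendByZero k c z| ≤ 1 := by
  unfold extendByZero
  split_ifs with h
  · exact hc _ (by omega)
  · simp

/-- Only `b 0, …, b (k-2)` enter `J(a, b)`, hence the extension of `b` from `k - 1` entries. -/
def jacobiKernel (k : ℕ) (a b : ℕ → ℝ) : ℤ → ℤ → ℝ :=
  triWeight (extendByZero k a) (extendByZero (k - 1) b)

theorem jacobiMatrix_apply_eq_jacobiKernel (k : ℕ) (a b : ℕ → ℝ) (i j : Fin k) :
    jacobiMatrix k a b i j = jacobiKernel k a b i j := by
  have := i.isLt
  have := j.isLt
  simp only [jacobiMatrix, jacobiKernel, triWeight, extendByZero, Matrix.of_apply,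
    Int.toNat_natCast]
  split_ifs <;> first | rfl | omega

theorem jacobiKernel_eq_zero_of_not_mem {k : ℕ} {a b : ℕ → ℝ} {p : ℤ} (hp : ¬ (0 ≤ p ∧ p < k))
    (q : ℤ) : jacobiKernel k a b p q = 0 := by
  simp only [jacobiKernel, triWeight, extendByZero]
  split_ifs <;> first | rfl | omega

theorem triWeight_eq_zero_of_far {α β : ℤ → ℝ} {p q : ℤ} (h : ¬ (q - 1 ≤ p ∧ p ≤ q + 1)) :
    triWeight α β p q = 0 := by
  simp only [triWeight]
  split_ifs <;> first | rfl | omega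

theorem jacobiMatrix_pow_apply (k : ℕ) (a b : ℕ → ℝ) (n : ℕ) (i j : Fin k) :
    (jacobiMatrix k a b ^ n) i j = triPow (jacobiKernel k a b) n i j := by
  induction n generalizing j with
  | zero =>
    simp only [pow_zero, Matrix.one_apply, triPow, Fin.ext_iff]
    norm_cast
  | succ n ih =>
    rw [pow_succ, Matrix.mul_apply]
    simp only [ih, jacobiMatrix_apply_eq_jacobiKernel]
    exact sum_fin_eq_three_of_eq_zero
      (fun z => triPow (jacobiKernel k a b) n i z * jacobiKernel k a b z j) j
      (fun z hz => by simp [jacobiKernel_eq_zero_of_not_mem hz])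
      (fun z hz => by simp [jacobiKernel, triWeight_eq_zero_of_far hz])

/-- `cosMoment x y n m` is the `m`-th Fourier cosine coefficient of `(x + 2 y cos t)ⁿ` on
`[0, π]`, i.e. the `(i, i - m)` entry of the `n`-th power of the constant Jacobi kernel. -/
def cosMoment (x y : ℝ) (n : ℕ) (m : ℤ) : ℝ :=
  (1 / Real.pi) * ∫ t in (0 : ℝ)..Real.pi, (x + 2 * y * Real.cos t) ^ n * Real.cos (m * t)

theorem cosMoment_zero (x y : ℝ) (m : ℤ) : cosMoment x y 0 m = if m = 0 then 1 else 0 := by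
  simp only [cosMoment, pow_zero, one_mul]
  split_ifs with hm
  · simp [hm, Real.pi_ne_zero]
  · rw [intervalIntegral.integral_comp_mul_left (fun t => Real.cos t) (Int.cast_ne_zero.mpr hm),
      integral_cos]
    simp [Real.sin_int_mul_pi]

theorem cosMoment_succ (x y : ℝ) (n : ℕ) (m : ℤ) :
    cosMoment x y (n + 1) m =
      cosMoment x y n (m + 1) * y + cosMoment x y n m * x + cosMoment x y n (m - 1) * y := by
  have hint : ∀ c : ℝ, IntervalIntegrable
      (fun t => (x + 2 * y * Real.cos t) ^ n * Real.cos (c * t)) volume 0 Real.pi :=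
    fun c => Continuous.intervalIntegrable (by fun_prop) _ _
  have key : ∀ t, (x + 2 * y * Real.cos t) ^ (n + 1) * Real.cos (m * t) =
      (x + 2 * y * Real.cos t) ^ n * Real.cos (((m + 1 : ℤ) : ℝ) * t) * y
        + (x + 2 * y * Real.cos t) ^ n * Real.cos (m * t) * x
        + (x + 2 * y * Real.cos t) ^ n * Real.cos (((m - 1 : ℤ) : ℝ) * t) * y := by
    intro t
    -- product-to-sum: `2 cos t cos (m t) = cos ((m + 1) t) + cos ((m - 1) t)`
    have h := Real.cos_add (m * t) t
    have h' := Real.cos_sub (m * t) t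
    push_cast
    rw [add_mul, sub_mul, one_mul, h, h']
    ring
  simp only [cosMoment, key]
  rw [intervalIntegral.integral_add ((hint _).mul_const _ |>.add ((hint _).mul_const _))
      ((hint _).mul_const _), intervalIntegral.integral_add ((hint _).mul_const _)
      ((hint _).mul_const _)]
  simp only [intervalIntegral.integral_mul_const]
  ring

theorem triPow_triWeight_const (x y : ℝ) (n : ℕ) (i j : ℤ) :
    triPow (triWeight (fun _ => x) (fun _ => y)) n i j = cosMoment x y n (i - j) := by
  induction n generalizing j with
  | zero => simp [triPow, cosMoment_zero, sub_eq_zero]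
  | succ n ih =>
    have h₁ : triWeight (fun _ => x) (fun _ => y) (j - 1) j = y := by simp [triWeight]
    have h₂ : triWeight (fun _ => x) (fun _ => y) j j = x := by simp [triWeight]
    have h₃ : triWeight (fun _ => x) (fun _ => y) (j + 1) j = y := by simp [triWeight]
    simp only [triPow, ih, cosMoment_succ, h₁, h₂, h₃]
    rw [show i - (j - 1) = i - j + 1 by ring, show i - (j + 1) = i - j - 1 by ring]

theorem continuous_cosMoment (n : ℕ) (m : ℤ) :
    Continuous fun p : ℝ × ℝ => cosMoment p.1 p.2 n m :=
  continuous_const.mul <| intervalIntegral.continuous_parametric_intervalIntegral_of_continuous'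
    (by fun_prop) _ _

theorem abs_cosMoment_le {x y : ℝ} (hx : |x| ≤ 1) (hy : |y| ≤ 1) (n : ℕ) (m : ℤ) :
    |cosMoment x y n m| ≤ 3 ^ n := by
  simpa [triPow_triWeight_const] using
    abs_triPow_le (abs_triWeight_le_one (fun _ => hx) (fun _ => hy)) n m 0

def localVariation (f : ℤ → ℝ) (n : ℕ) (j : ℤ) : ℝ :=
  ∑ i ∈ Finset.Ico (j - n) (j + n), |f (i + 1) - f i|

theorem abs_sub_le_sum_Ico (f : ℤ → ℝ) {p q : ℤ} (hpq : p ≤ q) :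
    |f q - f p| ≤ ∑ i ∈ Finset.Ico p q, |f (i + 1) - f i| := by
  induction q, hpq using Int.leInduction with
  | base => simp
  | succ q hpq ih =>
    rw [← Finset.insert_Ico_right_eq_Ico_add_one hpq, Finset.sum_insert Finset.right_notMem_Ico]
    calc |f (q + 1) - f p| ≤ |f (q + 1) - f q| + |f q - f p| := abs_sub_le _ _ _
      _ ≤ _ := by gcongr

theorem abs_sub_le_localVariation (f : ℤ → ℝ) {n : ℕ} {p j : ℤ} (hp : |p - j| ≤ n) :
    |f p - f j| ≤ localVariation f n j := by
  have hsub : ∀ {lo hi : ℤ}, j - n ≤ lo → hi ≤ j + n →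
      ∑ i ∈ Finset.Ico lo hi, |f (i + 1) - f i| ≤ localVariation f n j := fun hlo hhi =>
    Finset.sum_le_sum_of_subset_of_nonneg (Finset.Ico_subset_Ico hlo hhi)
      fun _ _ _ => abs_nonneg _
  rw [abs_le] at hp
  rcases le_total p j with h | h
  · rw [abs_sub_comm]
    exact (abs_sub_le_sum_Ico f h).trans (hsub (by omega) (by omega))
  · exact (abs_sub_le_sum_Ico f h).trans (hsub (by omega) (by omega))

theorem abs_triWeight_sub_triWeight_le {α β α' β' : ℤ → ℝ} {s : Set ℤ} {ε : ℝ} (hε : 0 ≤ ε)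
    (hα : ∀ z ∈ s, |α z - α' z| ≤ ε) (hβ : ∀ z ∈ s, |β z - β' z| ≤ ε) {p q : ℤ}
    (hp : p ∈ s) (hq : q ∈ s) : |triWeight α β p q - triWeight α' β' p q| ≤ ε := by
  simp only [triWeight]
  split_ifs <;> simp [hα p hp, hβ p hp, hβ q hq, hε]

/-- Freezing the coefficients at `j` gives the constant kernel, whose diagonal entries are
`cosMoment (α j) (β j) n 0`. -/
theorem abs_triPow_diag_sub_cosMoment_le {α β : ℤ → ℝ} (hα : ∀ z, |α z| ≤ 1)
    (hβ : ∀ z, |β z| ≤ 1) (n : ℕ) (j : ℤ) :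
    |triPow (triWeight α β) n j j - cosMoment (α j) (β j) n 0|
      ≤ n * 3 ^ n * (localVariation α n j + localVariation β n j) := by
  have hV : 0 ≤ localVariation α n j + localVariation β n j := by
    unfold localVariation; positivity
  have h := abs_triPow_sub_triPow_le (abs_triWeight_le_one hα hβ)
    (abs_triWeight_le_one (α := fun _ => α j) (β := fun _ => β j) (by simp [hα]) (by simp [hβ]))
    n j j fun p q hp hq => abs_triWeight_sub_triWeight_le (s := {z | |z - j| ≤ n}) hV
      (fun z hz => (abs_sub_le_localVariation α hz).trans (le_add_of_nonneg_right
        (by unfold localVariation; positivity)))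
      (fun z hz => (abs_sub_le_localVariation β hz).trans (le_add_of_nonneg_left
        (by unfold localVariation; positivity))) hp hq
  rwa [triPow_triWeight_const, sub_self] at h

theorem sum_localVariation_le (f : ℤ → ℝ) (n k : ℕ) :
    ∑ j ∈ Finset.range k, localVariation f n j
      ≤ 2 * n * ∑ i ∈ Finset.Ico (-n : ℤ) (k + n), |f (i + 1) - f i| := by
  set g : ℤ → ℝ := fun i => |f (i + 1) - f i|
  have hshift : ∀ j : ℤ, localVariation f n j = ∑ d ∈ Finset.Ico (-n : ℤ) n, g (d + j) := by
    intro j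
    rw [Finset.sum_Ico_add', localVariation, neg_add_eq_sub, add_comm (n : ℤ)]
  have hrow : ∀ d ∈ Finset.Ico (-n : ℤ) n,
      ∑ j ∈ Finset.range k, g (d + j) ≤ ∑ i ∈ Finset.Ico (-n : ℤ) (k + n), g i := by
    intro d hd
    rw [Finset.mem_Ico] at hd
    refine (Finset.sum_map (Finset.range k) (Nat.castEmbedding.trans (addLeftEmbedding d))
      g).symm.trans_le (Finset.sum_le_sum_of_subset_of_nonneg ?_ fun _ _ _ => abs_nonneg _)
    intro i hi
    simp only [Finset.mem_map, Finset.mem_range, Function.Embedding.trans_apply,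
      Nat.castEmbedding_apply, addLeftEmbedding_apply] at hi
    obtain ⟨j, hj, rfl⟩ := hi
    rw [Finset.mem_Ico]
    omega
  calc ∑ j ∈ Finset.range k, localVariation f n j
      = ∑ d ∈ Finset.Ico (-n : ℤ) n, ∑ j ∈ Finset.range k, g (d + j) := by
        simp only [hshift]; exact Finset.sum_comm
    _ ≤ ∑ d ∈ Finset.Ico (-n : ℤ) n, ∑ i ∈ Finset.Ico (-n : ℤ) (k + n), g i :=
        Finset.sum_le_sum hrow
    _ = 2 * n * ∑ i ∈ Finset.Ico (-n : ℤ) (k + n), g i := by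
        rw [Finset.sum_const, Int.card_Ico, nsmul_eq_mul]
        congr 1
        rw [show (n : ℤ) - -n = ((2 * n : ℕ) : ℤ) by push_cast; ring, Int.toNat_natCast]
        push_cast; ring

def variation (c : ℕ → ℝ) (k : ℕ) : ℝ :=
  ∑ i ∈ Finset.range (k - 1), |c (i + 1) - c i|

theorem variation_nonneg (c : ℕ → ℝ) (k : ℕ) : 0 ≤ variation c k :=
  Finset.sum_nonneg fun _ _ => abs_nonneg _

theorem variation_mono (c : ℕ → ℝ) {k l : ℕ} (hkl : k ≤ l) : variation c k ≤ variation c l :=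
  Finset.sum_le_sum_of_subset_of_nonneg (Finset.range_subset_range.mpr (by omega))
    fun _ _ _ => abs_nonneg _

/-- Extending by zero adds the two jumps `|c 0|` and `|c (k-1)|` at the ends. -/
theorem sum_Ico_neg_one_abs_sub_extendByZero_le {k : ℕ} {c : ℕ → ℝ} (hc : ∀ i < k, |c i| ≤ 1) :
    ∑ i ∈ Finset.Ico (-1 : ℤ) k, |extendByZero k c (i + 1) - extendByZero k c i|
      ≤ variation c k + 2 := by
  rw [Int.Ico_eq_finset_map, Finset.sum_map, show ((k : ℤ) - -1).toNat = k + 1 by omega]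
  simp only [Function.Embedding.trans_apply, Nat.castEmbedding_apply, addLeftEmbedding_apply]
  rcases k with _ | m
  · simp [extendByZero, variation]
  rw [Finset.sum_range_succ', Finset.sum_range_succ]
  have hfirst : |extendByZero (m + 1) c (-1 + (0 : ℕ) + 1) - extendByZero (m + 1) c (-1 + (0 : ℕ))|
      ≤ 1 := by
    rw [show -1 + ((0 : ℕ) : ℤ) + 1 = ((0 : ℕ) : ℤ) by simp, extendByZero_natCast c (by omega),
      extendByZero_of_not_mem c (by omega), sub_zero]
    exact hc 0 (by omega)
  have hlast : |extendByZero (m + 1) c (-1 + (m + 1 : ℕ) + 1)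
      - extendByZero (m + 1) c (-1 + (m + 1 : ℕ))| ≤ 1 := by
    rw [extendByZero_of_not_mem c (by omega), show -1 + ((m + 1 : ℕ) : ℤ) = m by push_cast; ring,
      extendByZero_natCast c (by omega), zero_sub, abs_neg]
    exact hc m (by omega)
  have hmid : ∑ j ∈ Finset.range m, |extendByZero (m + 1) c (-1 + (j + 1 : ℕ) + 1)
      - extendByZero (m + 1) c (-1 + (j + 1 : ℕ))| = variation c (m + 1) := by
    rw [variation, Nat.add_sub_cancel]
    refine Finset.sum_congr rfl fun j hj => ?_
    rw [Finset.mem_range] at hj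
    rw [show -1 + ((j + 1 : ℕ) : ℤ) + 1 = ((j + 1 : ℕ) : ℤ) by push_cast; ring,
      show -1 + ((j + 1 : ℕ) : ℤ) = j by push_cast; ring,
      extendByZero_natCast c (by omega), extendByZero_natCast c (by omega)]
  linarith

theorem sum_abs_sub_extendByZero_le {k : ℕ} {c : ℕ → ℝ} (hc : ∀ i < k, |c i| ≤ 1)
    (lo hi : ℤ) :
    ∑ i ∈ Finset.Ico lo hi, |extendByZero k c (i + 1) - extendByZero k c i|
      ≤ variation c k + 2 := by
  set g : ℤ → ℝ := fun i => |extendByZero k c (i + 1) - extendByZero k c i|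
  have hsupp : ∀ i ∈ Finset.Ico lo hi ∪ Finset.Ico (-1) k, i ∉ Finset.Ico (-1 : ℤ) k →
      g i = 0 := by
    intro i _ hi
    rw [Finset.mem_Ico] at hi
    simp only [g]
    rw [extendByZero_of_not_mem c (by omega), extendByZero_of_not_mem c (by omega), sub_zero,
      abs_zero]
  calc ∑ i ∈ Finset.Ico lo hi, g i ≤ ∑ i ∈ Finset.Ico lo hi ∪ Finset.Ico (-1) k, g i :=
        Finset.sum_le_sum_of_subset_of_nonneg Finset.subset_union_left
          fun _ _ _ => abs_nonneg _
    _ = ∑ i ∈ Finset.Ico (-1 : ℤ) k, g i :=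
        (Finset.sum_subset Finset.subset_union_right hsupp).symm
    _ ≤ variation c k + 2 := sum_Ico_neg_one_abs_sub_extendByZero_le hc

theorem trace_jacobiMatrix_pow (k : ℕ) (a b : ℕ → ℝ) (n : ℕ) :
    (jacobiMatrix k a b ^ n).trace =
      ∑ j ∈ Finset.range k, triPow (jacobiKernel k a b) n j j := by
  simp only [Matrix.trace, Matrix.diag_apply, jacobiMatrix_pow_apply]
  exact Fin.sum_univ_eq_sum_range (fun j => triPow (jacobiKernel k a b) n j j) k

/-- Only the last term differs: there the zero extension replaces `b (k-1)` by `0`. -/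
theorem abs_sum_cosMoment_extendByZero_sub_le {k : ℕ} {a b : ℕ → ℝ}
    (ha : ∀ i < k, |a i| ≤ 1) (hb : ∀ i < k, |b i| ≤ 1) (n : ℕ) :
    |∑ j ∈ Finset.range k,
        cosMoment (extendByZero k a j) (extendByZero (k - 1) b j) n 0
      - ∑ j ∈ Finset.range k, cosMoment (a j) (b j) n 0| ≤ 2 * 3 ^ n := by
  rcases k with _ | m
  · simp
  have hinterior : ∑ j ∈ Finset.range m, cosMoment (extendByZero (m + 1) a j)
      (extendByZero m b j) n 0 = ∑ j ∈ Finset.range m, cosMoment (a j) (b j) n 0 := by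
    refine Finset.sum_congr rfl fun j hj => ?_
    rw [Finset.mem_range] at hj
    rw [extendByZero_natCast a (by omega), extendByZero_natCast b hj]
  rw [Finset.sum_range_succ, Finset.sum_range_succ, Nat.add_sub_cancel, hinterior,
    add_sub_add_left_eq_sub]
  calc _ ≤ 3 ^ n + 3 ^ n := (abs_sub _ _).trans (add_le_add
          (abs_cosMoment_le (abs_extendByZero_le ha _) (abs_extendByZero_le
            (fun i hi => hb i (by omega)) _) n 0)
          (abs_cosMoment_le (ha m (by omega)) (hb m (by omega)) n 0))
    _ = 2 * 3 ^ n := by ring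

theorem abs_trace_pow_sub_sum_cosMoment_le {k : ℕ} {a b : ℕ → ℝ}
    (ha : ∀ i < k, |a i| ≤ 1) (hb : ∀ i < k, |b i| ≤ 1) (n : ℕ) :
    |(jacobiMatrix k a b ^ n).trace - ∑ j ∈ Finset.range k, cosMoment (a j) (b j) n 0|
      ≤ n * 3 ^ n * (2 * n * (variation a k + variation b k + 4)) + 2 * 3 ^ n := by
  set α := extendByZero k a
  set β := extendByZero (k - 1) b
  have hb' : ∀ i < k - 1, |b i| ≤ 1 := fun i hi => hb i (by omega)
  have hlocal : ∑ j ∈ Finset.range k,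
      |triPow (jacobiKernel k a b) n j j - cosMoment (α j) (β j) n 0|
        ≤ n * 3 ^ n * (2 * n * (variation a k + variation b k + 4)) := by
    have hα := (sum_localVariation_le α n k).trans
      (mul_le_mul_of_nonneg_left (sum_abs_sub_extendByZero_le ha _ _) (by positivity))
    have hβ := (sum_localVariation_le β n k).trans
      (mul_le_mul_of_nonneg_left (sum_abs_sub_extendByZero_le hb' _ _) (by positivity))
    have hmono : 2 * (n : ℝ) * variation b (k - 1) ≤ 2 * n * variation b k :=
      mul_le_mul_of_nonneg_left (variation_mono b (Nat.sub_le k 1)) (by positivity)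
    calc _ ≤ ∑ j ∈ Finset.range k, n * 3 ^ n * (localVariation α n j + localVariation β n j) :=
          Finset.sum_le_sum fun j _ => abs_triPow_diag_sub_cosMoment_le
            (abs_extendByZero_le ha) (abs_extendByZero_le hb') n j
      _ ≤ _ := by
          rw [← Finset.mul_sum, Finset.sum_add_distrib]
          gcongr
          linarith
  rw [trace_jacobiMatrix_pow]
  calc _ ≤ |∑ j ∈ Finset.range k, (triPow (jacobiKernel k a b) n j j
            - cosMoment (α j) (β j) n 0)|
          + |∑ j ∈ Finset.range k, cosMoment (α j) (β j) n 0
            - ∑ j ∈ Finset.range k, cosMoment (a j) (b j) n 0| := by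
        rw [Finset.sum_sub_distrib]; exact abs_sub_le _ _ _
    _ ≤ _ := add_le_add ((Finset.abs_sum_le_sum_abs _ _).trans hlocal)
        (abs_sum_cosMoment_extendByZero_sub_le ha hb n)

/-- A vector with entries in `[0,1]` telescopes to a net change of at most `1`, so its variation
is dominated by its descents, each of size at most `1`. -/
theorem variation_le_one_add_two_mul_card {k : ℕ} {c : ℕ → ℝ}
    (hc : ∀ i < k, c i ∈ Set.Icc (0 : ℝ) 1) :
    variation c k ≤ 1 + 2 * ((Finset.range (k - 1)).filter fun i => ¬ c i ≤ c (i + 1)).card := by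
  rcases Nat.eq_zero_or_pos k with rfl | hk
  · simp [variation]
  have hterm : ∀ i ∈ Finset.range (k - 1),
      |c (i + 1) - c i| ≤ (c (i + 1) - c i) + if ¬ c i ≤ c (i + 1) then 2 else 0 := by
    intro i hi
    rw [Finset.mem_range] at hi
    have h₀ := hc i (by omega)
    have h₁ := hc (i + 1) (by omega)
    rw [Set.mem_Icc] at h₀ h₁
    split_ifs with h
    · rw [abs_of_nonneg (by linarith), add_zero]
    · rw [abs_of_neg (by linarith)]; linarith
  have h₀ := hc 0 hk
  have h₁ := hc (k - 1) (by omega)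
  rw [Set.mem_Icc] at h₀ h₁
  calc variation c k ≤ ∑ i ∈ Finset.range (k - 1),
        ((c (i + 1) - c i) + if ¬ c i ≤ c (i + 1) then (2 : ℝ) else 0) :=
        Finset.sum_le_sum hterm
    _ = (c (k - 1) - c 0) + 2 * ((Finset.range (k - 1)).filter
          fun i => ¬ c i ≤ c (i + 1)).card := by
        rw [Finset.sum_add_distrib, Finset.sum_range_sub c, Finset.sum_ite, Finset.sum_const_zero,
          add_zero, Finset.sum_const, nsmul_eq_mul, mul_comm]
    _ ≤ _ := by linarith

theorem tendsto_card_filter_not_div {P : ℕ → ℕ → Prop} [∀ k i, Decidable (P k i)]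
    (hP : Tendsto (fun k : ℕ => (((Finset.range (k - 1)).filter fun i => P k i).card : ℝ) / k)
      atTop (nhds 1)) :
    Tendsto (fun k : ℕ => (((Finset.range (k - 1)).filter fun i => ¬ P k i).card : ℝ) / k)
      atTop (nhds 0) := by
  have hsplit : ∀ k : ℕ, (((Finset.range (k - 1)).filter fun i => ¬ P k i).card : ℝ) / k
      = ((k - 1 : ℕ) : ℝ) / k - (((Finset.range (k - 1)).filter fun i => P k i).card : ℝ) / k := by
    intro k
    rw [← sub_div]
    congr 1
    rw [eq_sub_iff_add_eq, ← Nat.cast_add, add_comm, Finset.card_filter_add_card_filter_not,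
      Finset.card_range]
  have hlen : Tendsto (fun k : ℕ => ((k - 1 : ℕ) : ℝ) / k) atTop (nhds 1) := by
    have h := (tendsto_const_nhds (x := (1 : ℝ))).sub (tendsto_one_div_atTop_nhds_zero_nat (𝕜 := ℝ))
    rw [sub_zero] at h
    refine h.congr' ?_
    filter_upwards [Filter.eventually_ge_atTop 1] with k hk
    rw [Nat.cast_sub hk, Nat.cast_one, sub_div, div_self (by positivity)]
  simpa [hsplit] using hlen.sub hP

theorem isLittleO_variation_of_aeIncreasing {a : ℕ → ℕ → ℝ}
    (ha : ∀ k, ∀ i < k, a k i ∈ Set.Icc (0 : ℝ) 1) (hinc : AEIncreasing a) :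
    (fun k => variation (a k) k) =o[atTop] fun k => (k : ℝ) := by
  rw [Asymptotics.isLittleO_iff_tendsto fun k hk => by simp [variation, Nat.cast_eq_zero.mp hk]]
  have hdesc := tendsto_card_filter_not_div (P := fun k i => a k i ≤ a k (i + 1)) hinc
  have hbound : Tendsto (fun k : ℕ => 1 / (k : ℝ) + 2 * ((((Finset.range (k - 1)).filter
      fun i => ¬ a k i ≤ a k (i + 1)).card : ℝ) / k)) atTop (nhds 0) := by
    simpa using (tendsto_one_div_atTop_nhds_zero_nat (𝕜 := ℝ)).add (hdesc.const_mul 2)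
  refine squeeze_zero (fun k => div_nonneg (variation_nonneg _ _) k.cast_nonneg)
    (fun k => ?_) hbound
  rw [mul_div_assoc', ← add_div]
  exact div_le_div_of_nonneg_right (variation_le_one_add_two_mul_card (ha k)) k.cast_nonneg

theorem aeIncreasing_one_sub {a : ℕ → ℕ → ℝ} (hdec : AEDecreasing a) :
    AEIncreasing fun k i => 1 - a k i := by
  simp only [AEIncreasing, sub_le_sub_iff_left]
  exact hdec

theorem variation_one_sub (c : ℕ → ℝ) (k : ℕ) :
    variation (fun i => 1 - c i) k = variation c k := by
  simp only [variation, sub_sub_sub_cancel_left, abs_sub_comm]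

theorem memS_of_aeMonotone {a : ℕ → ℕ → ℝ} (ha : ∀ k, ∀ i < k, a k i ∈ Set.Icc (0 : ℝ) 1)
    (hma : AEMonotone a) : MemS a := by
  refine ⟨?_, ha⟩
  show (fun k => variation (a k) k) =o[atTop] _
  rcases hma with hinc | hdec
  · exact isLittleO_variation_of_aeIncreasing ha hinc
  · have ha' : ∀ k, ∀ i < k, 1 - a k i ∈ Set.Icc (0 : ℝ) 1 := fun k i hi => by
      obtain ⟨h₀, h₁⟩ := ha k i hi
      constructor <;> linarith
    simpa only [variation_one_sub] using isLittleO_variation_of_aeIncreasing ha'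
      (aeIncreasing_one_sub hdec)

theorem MemS.abs_le_one {a : ℕ → ℕ → ℝ} (ha : MemS a) (k : ℕ) : ∀ i < k, |a k i| ≤ 1 :=
  fun i hi => abs_le_one_of_mem_Icc (ha.2 k i hi)

theorem tendsto_trace_jacobiMatrix_pow_div {a b : ℕ → ℕ → ℝ} (ha : MemS a) (hb : MemS b)
    {μ : Measure (ℝ × ℝ)} (hμ : MuDistributedI a b μ) (n : ℕ) :
    Tendsto (fun k : ℕ => (1 / (k : ℝ)) * (jacobiMatrix k (a k) (b k) ^ n).trace) atTop
      (nhds (∫ p, cosMoment p.1 p.2 n 0 ∂μ)) := by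
  set C : ℝ := n * 3 ^ n * (2 * n)
  have herr : Tendsto (fun k : ℕ => C * (variation (a k) k / k + variation (b k) k / k
      + 4 * (1 / (k : ℝ))) + 2 * 3 ^ n * (1 / (k : ℝ))) atTop (nhds 0) := by
    have h := tendsto_one_div_atTop_nhds_zero_nat (𝕜 := ℝ)
    simpa [variation] using ((ha.1.tendsto_div_nhds_zero.add hb.1.tendsto_div_nhds_zero).add
      (h.const_mul 4)).const_mul C |>.add (h.const_mul (2 * 3 ^ n))
  have hdiff : Tendsto (fun k : ℕ => (1 / (k : ℝ)) * (jacobiMatrix k (a k) (b k) ^ n).trace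
      - (1 / (k : ℝ)) * ∑ j ∈ Finset.range k, cosMoment (a k j) (b k j) n 0) atTop (nhds 0) := by
    refine squeeze_zero_norm (fun k => ?_) herr
    rw [Real.norm_eq_abs, ← mul_sub, abs_mul, abs_of_nonneg (by positivity)]
    calc _ ≤ (1 / (k : ℝ)) * (n * 3 ^ n * (2 * n * (variation (a k) k + variation (b k) k + 4))
            + 2 * 3 ^ n) := by
          gcongr
          exact abs_trace_pow_sub_sum_cosMoment_le (ha.abs_le_one k) (hb.abs_le_one k) n
      _ = _ := by ring
  simpa using hdiff.add (hμ _ (continuous_cosMoment n 0).continuousOn)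

theorem jacobiTrace_pow (k : ℕ) (a b : ℕ → ℝ) (n : ℕ) :
    jacobiTrace k a b (· ^ n) = (jacobiMatrix k a b ^ n).trace := by
  rw [(jacobiMatrix_isHermitian k a b).trace_pow_eq_sum_pow_eigenvalues]
  rfl

theorem jacobiTrace_add (k : ℕ) (a b : ℕ → ℝ) (f g : ℝ → ℝ) :
    jacobiTrace k a b (fun x => f x + g x) = jacobiTrace k a b f + jacobiTrace k a b g :=
  Finset.sum_add_distrib

theorem jacobiTrace_const_mul (k : ℕ) (a b : ℕ → ℝ) (c : ℝ) (f : ℝ → ℝ) :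
    jacobiTrace k a b (fun x => c * f x) = c * jacobiTrace k a b f :=
  (Finset.mul_sum _ _ _).symm

section jacobiTrace

variable {k : ℕ} {a b : ℕ → ℝ}

theorem jacobiTrace_congr (ha : ∀ i < k, |a i| ≤ 1) (hb : ∀ i < k, |b i| ≤ 1) {f g : ℝ → ℝ}
    (hfg : Set.EqOn f g (Set.Icc (-3) 3)) : jacobiTrace k a b f = jacobiTrace k a b g :=
  Finset.sum_congr rfl fun i _ => hfg (jacobiMatrix_eigenvalues_mem_Icc ha hb i)

theorem abs_jacobiTrace_sub_le (ha : ∀ i < k, |a i| ≤ 1) (hb : ∀ i < k, |b i| ≤ 1)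
    {f g : ℝ → ℝ} {ε : ℝ} (hfg : ∀ x ∈ Set.Icc (-3 : ℝ) 3, |f x - g x| ≤ ε) :
    |jacobiTrace k a b f - jacobiTrace k a b g| ≤ k * ε := by
  rw [jacobiTrace, jacobiTrace, ← Finset.sum_sub_distrib]
  refine (Finset.abs_sum_le_sum_abs _ _).trans ?_
  simpa using Finset.sum_le_sum fun i (_ : i ∈ Finset.univ) =>
    hfg _ (jacobiMatrix_eigenvalues_mem_Icc ha hb i)

theorem abs_one_div_mul_jacobiTrace_sub_le (ha : ∀ i < k, |a i| ≤ 1) (hb : ∀ i < k, |b i| ≤ 1)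
    {f g : ℝ → ℝ} {ε : ℝ} (hε : 0 ≤ ε) (hfg : ∀ x ∈ Set.Icc (-3 : ℝ) 3, |f x - g x| ≤ ε) :
    |(1 / (k : ℝ)) * jacobiTrace k a b f - (1 / (k : ℝ)) * jacobiTrace k a b g| ≤ ε := by
  rw [← mul_sub, abs_mul, abs_of_nonneg (by positivity)]
  rcases k.eq_zero_or_pos with rfl | hk
  · simpa using hε
  calc _ ≤ (1 / (k : ℝ)) * (k * ε) := by gcongr; exact abs_jacobiTrace_sub_le ha hb hfg
    _ = ε := by rw [← mul_assoc, one_div_mul_cancel (by positivity), one_mul]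

end jacobiTrace

def symbolAverage (μ : Measure (ℝ × ℝ)) (φ : ℝ → ℝ) : ℝ :=
  (1 / Real.pi) * ∫ p, (∫ t in (0 : ℝ)..Real.pi, φ (p.1 + 2 * p.2 * Real.cos t)) ∂μ

theorem add_two_mul_cos_mem_Icc {p : ℝ × ℝ}
    (hp : p ∈ Set.Icc (0 : ℝ) 1 ×ˢ Set.Icc (0 : ℝ) 1) (t : ℝ) :
    p.1 + 2 * p.2 * Real.cos t ∈ Set.Icc (-3 : ℝ) 3 := by
  obtain ⟨⟨h₁, h₂⟩, h₃, h₄⟩ := hp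
  have := Real.neg_one_le_cos t
  have := Real.cos_le_one t
  constructor <;> nlinarith

section symbolAverage

variable {μ : Measure (ℝ × ℝ)}

theorem integrable_symbolIntegrand [IsFiniteMeasure μ]
    (hsupp : ∀ᵐ p ∂μ, p ∈ Set.Icc (0 : ℝ) 1 ×ˢ Set.Icc (0 : ℝ) 1) {f : ℝ → ℝ}
    (hf : Continuous f) :
    Integrable (fun p : ℝ × ℝ => ∫ t in (0 : ℝ)..Real.pi, f (p.1 + 2 * p.2 * Real.cos t)) μ := by
  obtain ⟨M, hM⟩ := (isCompact_Icc (a := (-3 : ℝ)) (b := 3)).exists_bound_of_continuousOn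
    hf.continuousOn
  refine Integrable.mono' (integrable_const (M * |Real.pi - 0|))
    (intervalIntegral.continuous_parametric_intervalIntegral_of_continuous' (by fun_prop) _ _
      |>.aestronglyMeasurable) ?_
  filter_upwards [hsupp] with p hp
  exact intervalIntegral.norm_integral_le_of_norm_le_const fun t _ =>
    hM _ (add_two_mul_cos_mem_Icc hp t)

theorem symbolAverage_congr
    (hsupp : ∀ᵐ p ∂μ, p ∈ Set.Icc (0 : ℝ) 1 ×ˢ Set.Icc (0 : ℝ) 1) {f g : ℝ → ℝ}
    (hfg : Set.EqOn f g (Set.Icc (-3) 3)) :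
    symbolAverage μ f = symbolAverage μ g := by
  refine congrArg (_ * ·) (integral_congr_ae ?_)
  filter_upwards [hsupp] with p hp
  exact intervalIntegral.integral_congr fun t _ => hfg (add_two_mul_cos_mem_Icc hp t)

theorem symbolAverage_add [IsFiniteMeasure μ]
    (hsupp : ∀ᵐ p ∂μ, p ∈ Set.Icc (0 : ℝ) 1 ×ˢ Set.Icc (0 : ℝ) 1) {f g : ℝ → ℝ}
    (hf : Continuous f) (hg : Continuous g) :
    symbolAverage μ (fun x => f x + g x) = symbolAverage μ f + symbolAverage μ g := by
  have hint : ∀ {h : ℝ → ℝ}, Continuous h → ∀ p : ℝ × ℝ, IntervalIntegrable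
      (fun t => h (p.1 + 2 * p.2 * Real.cos t)) volume 0 Real.pi :=
    fun hh _ => Continuous.intervalIntegrable (by fun_prop) _ _
  simp only [symbolAverage, intervalIntegral.integral_add (hint hf _) (hint hg _)]
  rw [integral_add (integrable_symbolIntegrand hsupp hf) (integrable_symbolIntegrand hsupp hg),
    mul_add]

theorem abs_symbolAverage_sub_le [IsProbabilityMeasure μ]
    (hsupp : ∀ᵐ p ∂μ, p ∈ Set.Icc (0 : ℝ) 1 ×ˢ Set.Icc (0 : ℝ) 1) {f g : ℝ → ℝ}
    (hf : Continuous f) (hg : Continuous g) {ε : ℝ}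
    (hfg : ∀ x ∈ Set.Icc (-3 : ℝ) 3, |f x - g x| ≤ ε) :
    |symbolAverage μ f - symbolAverage μ g| ≤ ε := by
  have hpi : 0 < Real.pi := Real.pi_pos
  have hpoint : ∀ᵐ p ∂μ, ‖(∫ t in (0 : ℝ)..Real.pi, f (p.1 + 2 * p.2 * Real.cos t))
      - ∫ t in (0 : ℝ)..Real.pi, g (p.1 + 2 * p.2 * Real.cos t)‖ ≤ ε * Real.pi := by
    filter_upwards [hsupp] with p hp
    rw [← intervalIntegral.integral_sub (Continuous.intervalIntegrable (by fun_prop) _ _)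
      (Continuous.intervalIntegrable (by fun_prop) _ _)]
    simpa [abs_of_pos hpi] using intervalIntegral.norm_integral_le_of_norm_le_const
      (f := fun t => f (p.1 + 2 * p.2 * Real.cos t) - g (p.1 + 2 * p.2 * Real.cos t))
      (a := 0) (b := Real.pi) fun t _ => hfg _ (add_two_mul_cos_mem_Icc hp t)
  rw [symbolAverage, symbolAverage, ← mul_sub, ← integral_sub (integrable_symbolIntegrand hsupp hf)
    (integrable_symbolIntegrand hsupp hg), abs_mul, abs_of_pos (by positivity)]
  calc _ ≤ 1 / Real.pi * (ε * Real.pi) := by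
        gcongr
        simpa using norm_integral_le_of_norm_le_const hpoint
    _ = ε := by field_simp

end symbolAverage

theorem symbolAverage_const_mul (μ : Measure (ℝ × ℝ)) (c : ℝ) (f : ℝ → ℝ) :
    symbolAverage μ (fun x => c * f x) = c * symbolAverage μ f := by
  simp only [symbolAverage, intervalIntegral.integral_const_mul, integral_const_mul]
  ring

theorem symbolAverage_pow (μ : Measure (ℝ × ℝ)) (n : ℕ) :
    symbolAverage μ (· ^ n) = ∫ p, cosMoment p.1 p.2 n 0 ∂μ := by
  simp [symbolAverage, cosMoment, integral_const_mul]

theorem tendsto_jacobiTrace_polynomial {a b : ℕ → ℕ → ℝ} (ha : MemS a) (hb : MemS b)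
    {μ : Measure (ℝ × ℝ)} [IsFiniteMeasure μ]
    (hsupp : ∀ᵐ p ∂μ, p ∈ Set.Icc (0 : ℝ) 1 ×ˢ Set.Icc (0 : ℝ) 1)
    (hμ : MuDistributedI a b μ) (P : Polynomial ℝ) :
    Tendsto (fun k : ℕ => (1 / (k : ℝ)) * jacobiTrace k (a k) (b k) fun x => P.eval x) atTop
      (nhds (symbolAverage μ fun x => P.eval x)) := by
  induction P using Polynomial.induction_on' with
  | add P Q hP hQ =>
    simp only [Polynomial.eval_add, jacobiTrace_add, mul_add,
      symbolAverage_add hsupp P.continuous Q.continuous]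
    exact hP.add hQ
  | monomial n c =>
    simp only [Polynomial.eval_monomial, jacobiTrace_const_mul, symbolAverage_const_mul,
      jacobiTrace_pow, symbolAverage_pow, mul_left_comm _ c]
    exact (tendsto_trace_jacobiMatrix_pow_div ha hb hμ n).const_mul c

/-- Weierstrass approximation and an `ε/3`-argument. -/
theorem tendsto_of_tendsto_polynomial {F : ℕ → (ℝ → ℝ) → ℝ} {G : (ℝ → ℝ) → ℝ} {a b : ℝ}
    (hF : ∀ k f g ε, Continuous f → Continuous g → 0 ≤ ε →
      (∀ x ∈ Set.Icc a b, |f x - g x| ≤ ε) → |F k f - F k g| ≤ ε)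
    (hG : ∀ f g ε, Continuous f → Continuous g → 0 ≤ ε →
      (∀ x ∈ Set.Icc a b, |f x - g x| ≤ ε) → |G f - G g| ≤ ε)
    (hP : ∀ P : Polynomial ℝ, Tendsto (fun k => F k fun x => P.eval x) atTop
      (nhds (G fun x => P.eval x)))
    {φ : ℝ → ℝ} (hφ : Continuous φ) : Tendsto (fun k => F k φ) atTop (nhds (G φ)) := by
  rw [Metric.tendsto_atTop]
  intro ε hε
  obtain ⟨P, hPφ⟩ := exists_polynomial_near_of_continuousOn a b φ hφ.continuousOn (ε / 3)
    (by positivity)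
  have hclose : ∀ x ∈ Set.Icc a b, |φ x - P.eval x| ≤ ε / 3 := fun x hx => by
    rw [abs_sub_comm]; exact (hPφ x hx).le
  obtain ⟨K, hK⟩ := Metric.tendsto_atTop.mp (hP P) (ε / 3) (by positivity)
  refine ⟨K, fun k hk => ?_⟩
  have h₁ := hF k _ _ _ hφ P.continuous (by positivity) hclose
  have h₂ := hG _ _ _ hφ P.continuous (by positivity) hclose
  have h₃ := hK k hk
  rw [Real.dist_eq] at h₃ ⊢
  have h₄ := abs_sub_le (F k φ) (F k fun x => P.eval x) (G φ)
  have h₅ := abs_sub_le (F k fun x => P.eval x) (G fun x => P.eval x) (G φ)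
  rw [abs_sub_comm (G _)] at h₅
  linarith

theorem trace_formula_of_memS {a b : ℕ → ℕ → ℝ} (ha : MemS a) (hb : MemS b)
    {μ : Measure (ℝ × ℝ)} [IsProbabilityMeasure μ]
    (hsupp : ∀ᵐ p ∂μ, p ∈ Set.Icc (0 : ℝ) 1 ×ˢ Set.Icc (0 : ℝ) 1)
    (hμ : MuDistributedI a b μ) {φ : ℝ → ℝ} (hφ : ContinuousOn φ (Set.Icc (-3 : ℝ) 3)) :
    Tendsto (fun k : ℕ => (1 / (k : ℝ)) * jacobiTrace k (a k) (b k) φ) atTop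
      (nhds (symbolAverage μ φ)) := by
  set ψ := Set.IccExtend (by norm_num : (-3 : ℝ) ≤ 3) ((Set.Icc (-3 : ℝ) 3).domRestrict φ)
  have hψ : Continuous ψ := continuous_IccExtend_iff.mpr hφ.domRestrict
  have hψφ : Set.EqOn ψ φ (Set.Icc (-3) 3) := fun x hx => Set.IccExtend_of_mem _ _ hx
  rw [← symbolAverage_congr hsupp hψφ]
  refine (tendsto_of_tendsto_polynomial (a := -3) (b := 3)
    (F := fun k f => (1 / (k : ℝ)) * jacobiTrace k (a k) (b k) f) ?_
    (fun f g ε hf hg _ hfg => abs_symbolAverage_sub_le hsupp hf hg hfg)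
    (tendsto_jacobiTrace_polynomial ha hb hsupp hμ) hψ).congr fun k => ?_
  · exact fun k f g ε _ _ hε hfg =>
      abs_one_div_mul_jacobiTrace_sub_le (ha.abs_le_one k) (hb.abs_le_one k) hε hfg
  · rw [jacobiTrace_congr (ha.abs_le_one k) (hb.abs_le_one k) hψφ]

/-- the trace formula for a.e. monotone sequences with entries in `[0,1]` that
are `μ`-distributed on `I²`. -/
theorem trace_formula_monotone_bounded (a b : ℕ → ℕ → ℝ)
    (ha0 : ∀ k : ℕ, ∀ i < k, a k i ∈ Set.Icc (0 : ℝ) 1)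
    (hb0 : ∀ k : ℕ, ∀ i < k, b k i ∈ Set.Icc (0 : ℝ) 1)
    (hma : AEMonotone a) (hmb : AEMonotone b)
    (μ : Measure (ℝ × ℝ)) [IsProbabilityMeasure μ]
    (hsupp : μ ((Set.Icc (0 : ℝ) 1 ×ˢ Set.Icc (0 : ℝ) 1)ᶜ) = 0)
    (hμ : MuDistributedI a b μ)
    (φ : ℝ → ℝ) (hφ : ContinuousOn φ (Set.Icc (-3 : ℝ) 3)) :
    Filter.Tendsto (fun k : ℕ => (1 / (k : ℝ)) * jacobiTrace k (a k) (b k) φ)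
      Filter.atTop
      (nhds ((1 / Real.pi) *
        ∫ p, (∫ t in (0 : ℝ)..Real.pi, φ (p.1 + 2 * p.2 * Real.cos t)) ∂μ)) :=
  trace_formula_of_memS (memS_of_aeMonotone ha0 hma) (memS_of_aeMonotone hb0 hmb)
    (ae_iff.mpr hsupp) hμ hφ
end
end

section
/- Let a ∈ ℝ and b > 0, and let T_k(a,b) be the k×k tridiagonal Toeplitz matrix with diagonal entries a and sub/super-diagonal entries b. Then for every continuous function φ on [a−2b, a+2b], lim_{k→∞} (1/k)·Trace[φ(T_k(a,b))] = (1/π) ∫_0^π φ(a + 2b·cos x) dx. -/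
open Filter MeasureTheory

noncomputable section

/-!
For `θ = jπ/(k+1)`, `1 ≤ j ≤ k`, the sequence `xᵢ = sin(iθ)` satisfies
`b·x_{i-1} + a·xᵢ + b·x_{i+1} = (a + 2b cos θ)·xᵢ` and vanishes at `i = 0` and `i = k+1`, so
`(x₁, …, x_k)` is an eigenvector of `T_k(a,b)`. These `k` eigenvalues are distinct because `b ≠ 0`,
hence they are the whole spectrum, each simple, and `(1/k)·Trace[φ(T_k(a,b))]` is a Riemann sum of
`x ↦ φ(a + 2b cos x)` over `[0, π]`.
-/

open Finset Real Matrix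

namespace Matrix

variable {n R : Type*} [Fintype n] [DecidableEq n]

theorem mem_spectrum_of_mulVec_eq_smul [Field R] {A : Matrix n n R} {μ : R} {v : n → R}
    (hv : v ≠ 0) (h : A *ᵥ v = μ • v) : μ ∈ spectrum R A := by
  rw [← spectrum_toLin']
  exact Module.End.HasEigenvalue.mem_spectrum <|
    Module.End.hasEigenvalue_of_hasEigenvector ⟨Module.End.mem_eigenspace_iff.mpr h, hv⟩

theorem IsHermitian.sum_comp_eigenvalues_eq {𝕜 : Type*} [RCLike 𝕜] {A : Matrix n n 𝕜}
    (hA : A.IsHermitian) {μ : n → ℝ} (hμ : Function.Injective μ)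
    (hspec : ∀ j, μ j ∈ spectrum ℝ A) (φ : ℝ → ℝ) :
    ∑ i, φ (hA.eigenvalues i) = ∑ j, φ (μ j) := by
  -- `card n` distinct spectral values exhaust the multiset of `card n` eigenvalues
  have hle : univ.val.map μ ≤ univ.val.map hA.eigenvalues := by
    rw [Multiset.le_iff_subset (univ.nodup.map hμ)]
    intro x hx
    obtain ⟨j, -, rfl⟩ := Multiset.mem_map.mp hx
    obtain ⟨i, hi⟩ := hA.spectrum_real_eq_range_eigenvalues ▸ hspec j
    exact Multiset.mem_map.mpr ⟨i, mem_univ i, hi⟩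
  have heq := Multiset.eq_of_le_of_card_le hle (by simp)
  calc ∑ i, φ (hA.eigenvalues i) = ((univ.val.map hA.eigenvalues).map φ).sum := by
        rw [Multiset.map_map]; rfl
    _ = ∑ j, φ (μ j) := by rw [← heq, Multiset.map_map]; rfl

end Matrix

variable {k : ℕ}

/-- At `i = 0` the truncated `i - 1` is `0`, harmless since `b 0` meets `s 0 = 0`. -/
theorem jacobiMatrix_mulVec_apply (a b s : ℕ → ℝ) (h₀ : s 0 = 0) (hk : s (k + 1) = 0)
    (i : Fin k) :
    (jacobiMatrix k a b *ᵥ fun j => s (j + 1)) i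
      = b (i - 1) * s i + a i * s (i + 1) + b i * s (i + 2) := by
  have hterm : ∀ j : ℕ, (if (i : ℕ) = j then a i else if (i : ℕ) + 1 = j then b i
        else if j + 1 = i then b j else 0) * s (j + 1)
      = (if j = i - 1 then b (i - 1) * s i else 0) + (if j = i then a i * s (i + 1) else 0)
        + (if j = i + 1 then b i * s (i + 2) else 0) := by
    intro j
    split_ifs <;> grind
  simp only [mulVec, dotProduct, jacobiMatrix, of_apply]
  rw [Fin.sum_univ_eq_sum_range (fun j => (if (i : ℕ) = j then a i
        else if (i : ℕ) + 1 = j then b i else if j + 1 = i then b j else 0) * s (j + 1)),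
    sum_congr rfl fun j _ => hterm j,
    sum_add_distrib, sum_add_distrib, sum_ite_eq', sum_ite_eq', sum_ite_eq']
  have hi := i.isLt
  simp only [mem_range]
  split_ifs <;> grind

def sineVec (k : ℕ) (θ : ℝ) : Fin k → ℝ := fun i => sin ((i + 1 : ℕ) * θ)

theorem sineVec_ne_zero (hk : 0 < k) {θ : ℝ} (hθ : sin θ ≠ 0) : sineVec k θ ≠ 0 := by
  intro h
  exact hθ (by simpa [sineVec] using congrFun h ⟨0, hk⟩)

theorem jacobiMatrix_const_mulVec_sineVec (a b : ℝ) {θ : ℝ}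
    (hθ : sin ((k + 1 : ℕ) * θ) = 0) :
    jacobiMatrix k (fun _ => a) (fun _ => b) *ᵥ sineVec k θ
      = (a + 2 * b * cos θ) • sineVec k θ := by
  ext i
  unfold sineVec
  rw [jacobiMatrix_mulVec_apply _ _ (fun m : ℕ => sin (m * θ)) (by simp) hθ]
  have hsum :
      sin ((i : ℕ) * θ) + sin ((i + 2 : ℕ) * θ) = 2 * cos θ * sin ((i + 1 : ℕ) * θ) := by
    have h₁ : ((i : ℕ) : ℝ) * θ = ((i + 1 : ℕ) : ℝ) * θ - θ := by push_cast; ring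
    have h₂ : ((i + 2 : ℕ) : ℝ) * θ = ((i + 1 : ℕ) : ℝ) * θ + θ := by push_cast; ring
    rw [h₁, h₂, sin_sub, sin_add]
    ring
  simp only [Pi.smul_apply, smul_eq_mul]
  linear_combination b * hsum

theorem node_mem_Ioo (j : Fin k) : (j + 1) * π / (k + 1) ∈ Set.Ioo 0 π := by
  have : (j : ℝ) + 1 < k + 1 := by exact_mod_cast Nat.succ_lt_succ j.isLt
  refine ⟨by positivity, ?_⟩
  rw [div_lt_iff₀ (by positivity)]
  nlinarith [pi_pos]

theorem cos_node_injective (k : ℕ) :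
    Function.Injective fun j : Fin k => cos ((j + 1) * π / (k + 1)) := by
  intro i j hij
  have := injOn_cos (Set.Ioo_subset_Icc_self (node_mem_Ioo i))
    (Set.Ioo_subset_Icc_self (node_mem_Ioo j)) hij
  field_simp at this
  ext
  exact_mod_cast add_right_cancel this

theorem jacobiTrace_const {a b : ℝ} (hb : b ≠ 0) (φ : ℝ → ℝ) :
    jacobiTrace k (fun _ => a) (fun _ => b) φ
      = ∑ j ∈ range k, φ (a + 2 * b * cos ((j + 1) * π / (k + 1))) := by
  set μ : Fin k → ℝ := fun j => a + 2 * b * cos ((j + 1) * π / (k + 1))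
  have hμ : Function.Injective μ := fun i j hij =>
    cos_node_injective k (by simpa [μ, hb] using hij)
  have hspec (j : Fin k) : μ j ∈ spectrum ℝ (jacobiMatrix k (fun _ => a) (fun _ => b)) := by
    have hθ := node_mem_Ioo j
    refine mem_spectrum_of_mulVec_eq_smul
      (sineVec_ne_zero j.pos (sin_pos_of_pos_of_lt_pi hθ.1 hθ.2).ne')
      (jacobiMatrix_const_mulVec_sineVec a b ?_)
    rw [Nat.cast_succ, mul_div_cancel₀ _ (by positivity)]
    exact_mod_cast sin_nat_mul_pi (j + 1)
  rw [jacobiTrace, (jacobiMatrix_isHermitian k _ _).sum_comp_eigenvalues_eq hμ hspec φ,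
    Fin.sum_univ_eq_sum_range (fun j => φ (a + 2 * b * cos ((j + 1) * π / (k + 1))))]

section RiemannSum

variable {g : ℝ → ℝ} {T : ℝ}

theorem abs_mul_sub_integral_le {x y ε : ℝ} (hxy : x ≤ y)
    (hg : IntervalIntegrable g volume x y)
    (h : ∀ t ∈ Set.Ioc x y, |g x - g t| ≤ ε) :
    |(y - x) * g x - ∫ t in x..y, g t| ≤ ε * (y - x) := by
  calc |(y - x) * g x - ∫ t in x..y, g t| = ‖∫ t in x..y, (g x - g t)‖ := by
        rw [intervalIntegral.integral_sub intervalIntegrable_const hg,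
          intervalIntegral.integral_const, smul_eq_mul, Real.norm_eq_abs]
    _ ≤ ε * |y - x| :=
        intervalIntegral.norm_integral_le_of_norm_le_const (by rwa [Set.uIoc_of_le hxy])
    _ = ε * (y - x) := by rw [abs_of_nonneg (sub_nonneg.2 hxy)]

theorem abs_riemannSum_sub_integral_le {ε : ℝ} {n : ℕ} (hT : 0 ≤ T) (hn : 0 < n)
    (hg : ContinuousOn g (Set.Icc 0 T))
    (hε : ∀ s ∈ Set.Icc 0 T, ∀ t ∈ Set.Icc 0 T, |s - t| ≤ T / n → |g s - g t| ≤ ε) :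
    |T / n * ∑ j ∈ range n, g (j * T / n) - ∫ x in 0..T, g x| ≤ ε * T := by
  set x : ℕ → ℝ := fun j => j * T / n
  have hn_pos : (0 : ℝ) < n := by exact_mod_cast hn
  have hstep (j : ℕ) : x (j + 1) - x j = T / n := by simp only [x]; push_cast; ring
  have hstep_nonneg : 0 ≤ T / n := by positivity
  have hx_mem {j : ℕ} (hj : j ≤ n) : x j ∈ Set.Icc 0 T := by
    refine ⟨by positivity, div_le_of_le_mul₀ hn_pos.le hT ?_⟩
    rw [mul_comm T]
    exact mul_le_mul_of_nonneg_right (Nat.cast_le.mpr hj) hT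
  have hpiece {j : ℕ} (hj : j < n) : Set.Icc (x j) (x (j + 1)) ⊆ Set.Icc 0 T :=
    Set.Icc_subset_Icc (hx_mem hj.le).1 (hx_mem hj).2
  have hint {j : ℕ} (hj : j < n) : IntervalIntegrable g volume (x j) (x (j + 1)) :=
    (hg.mono (hpiece hj)).intervalIntegrable_of_Icc (by linarith [hstep j])
  have hsplit : ∫ t in (0 : ℝ)..T, g t = ∑ j ∈ range n, ∫ t in x j..x (j + 1), g t := by
    rw [intervalIntegral.sum_integral_adjacent_intervals (a := x) fun j hj => hint hj]
    simp only [x]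
    field_simp
    simp
  have hlocal {j : ℕ} (hj : j < n) :
      |T / n * g (x j) - ∫ t in x j..x (j + 1), g t| ≤ ε * (T / n) := by
    rw [← hstep j]
    refine abs_mul_sub_integral_le (by linarith [hstep j]) (hint hj) fun t ht => ?_
    have ht' : t ∈ Set.Icc (x j) (x (j + 1)) := Set.Ioc_subset_Icc_self ht
    refine hε _ (hx_mem hj.le) _ (hpiece hj ht') ?_
    rw [abs_sub_comm, abs_of_nonneg (by linarith [ht'.1]), ← hstep j]
    linarith [ht'.2]
  calc |T / n * ∑ j ∈ range n, g (j * T / n) - ∫ x in 0..T, g x|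
      = |∑ j ∈ range n, (T / n * g (x j) - ∫ t in x j..x (j + 1), g t)| := by
        rw [hsplit, mul_sum, sum_sub_distrib]
    _ ≤ ∑ j ∈ range n, ε * (T / n) :=
        (abs_sum_le_sum_abs _ _).trans (sum_le_sum fun j hj => hlocal (mem_range.1 hj))
    _ = ε * T := by rw [sum_const, card_range, nsmul_eq_mul]; field_simp

theorem tendsto_riemannSum_integral (hT : 0 < T) (hg : ContinuousOn g (Set.Icc 0 T)) :
    Tendsto (fun n : ℕ => T / n * ∑ j ∈ range n, g (j * T / n)) atTop
      (nhds (∫ x in 0..T, g x)) := by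
  rw [Metric.tendsto_atTop]
  intro ε hε
  obtain ⟨δ, hδ, hgδ⟩ := Metric.uniformContinuousOn_iff.mp
    (isCompact_Icc.uniformContinuousOn_of_continuous hg) (ε / (2 * T)) (by positivity)
  obtain ⟨N, hN⟩ := exists_nat_gt (T / δ)
  refine ⟨N, fun n hn => ?_⟩
  have hTδ : T / δ < n := hN.trans_le (by exact_mod_cast hn)
  have hpos : (0 : ℝ) < n := (div_pos hT hδ).trans hTδ
  have hmesh : T / n < δ := by rwa [div_lt_comm₀ hpos hδ]
  have hbound := abs_riemannSum_sub_integral_le hT.le (by exact_mod_cast hpos) hg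
    fun s hs t ht hst => (hgδ s hs t ht (by rw [Real.dist_eq]; linarith)).le
  rw [Real.dist_eq]
  calc _ ≤ ε / (2 * T) * T := hbound
    _ < ε := by field_simp; linarith

theorem tendsto_mean_interior_nodes (hT : 0 < T)
    (hg : ContinuousOn g (Set.Icc 0 T)) :
    Tendsto (fun k : ℕ => 1 / (k : ℝ) * ∑ j ∈ range k, g ((j + 1) * T / (k + 1))) atTop
      (nhds (1 / T * ∫ x in 0..T, g x)) := by
  have hriemann := (tendsto_riemannSum_integral hT hg).comp (tendsto_add_atTop_nat 1)
  have hscale : Tendsto (fun k : ℕ => (1 + 1 / (k : ℝ)) / T) atTop (nhds (1 / T)) := by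
    simpa using (tendsto_one_div_atTop_nhds_zero_nat.const_add 1).div_const T
  have hendpoint : Tendsto (fun k : ℕ => g 0 * (1 / (k : ℝ))) atTop (nhds 0) := by
    simpa using tendsto_one_div_atTop_nhds_zero_nat.const_mul (g 0)
  refine ((hscale.mul hriemann).sub hendpoint).congr' ?_ |>.trans (by simp)
  filter_upwards [eventually_ne_atTop 0] with k hk
  -- the left-endpoint Riemann sum with `k + 1` nodes differs from ours by its node at `0`
  simp only [Function.comp_apply, sum_range_succ' _ k]
  push_cast
  generalize ∑ j ∈ range k, g ((j + 1) * T / (k + 1)) = S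
  rw [zero_mul, zero_div]
  field_simp
  ring

end RiemannSum

/-- the asymptotic trace formula for tridiagonal Toeplitz matrices `T_k(a,b)`:
`lim (1/k)·Trace[φ(T_k(a,b))] = (1/π) ∫_0^π φ(a+2b cos x) dx` for `φ ∈ C[a-2b, a+2b]`. -/
theorem trace_formula_toeplitz (a b : ℝ) (hb : 0 < b)
    (φ : ℝ → ℝ) (hφ : ContinuousOn φ (Set.Icc (a - 2 * b) (a + 2 * b))) :
    Filter.Tendsto
      (fun k : ℕ => (1 / (k : ℝ)) * jacobiTrace k (fun _ => a) (fun _ => b) φ)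
      Filter.atTop
      (nhds ((1 / Real.pi) * ∫ x in (0 : ℝ)..Real.pi, φ (a + 2 * b * Real.cos x))) := by
  have hmaps : Set.MapsTo (fun x => a + 2 * b * cos x) (Set.Icc 0 π)
      (Set.Icc (a - 2 * b) (a + 2 * b)) := fun x _ =>
    ⟨by nlinarith [neg_one_le_cos x], by nlinarith [cos_le_one x]⟩
  have hg : ContinuousOn (fun x => φ (a + 2 * b * cos x)) (Set.Icc 0 π) :=
    hφ.comp (by fun_prop) hmaps
  simpa only [jacobiTrace_const hb.ne'] using tendsto_mean_interior_nodes pi_pos hg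
end
end

section
/- Let H_k be the k×k Jacobi matrix with zero diagonal and off-diagonal entries b_j = √(j/2) for j = 1,…,k−1, whose eigenvalues z_1^k,…,z_k^k are the zeros of the k-th Hermite polynomial. Then the contracted zeros are asymptotically distributed according to the Wigner semicircle law: for every bounded continuous function φ : ℝ → ℝ, lim_{k→∞} (1/k) Σ_{j=1}^k φ(z_j^k / √(k/2)) = (1/(2π)) ∫_{−2}^{2} φ(x) √(4 − x²) dx. -/
open Filter MeasureTheory

noncomputable section

/-!
Method of moments. The `m`-th power trace of the contracted matrix `H_k / √(k / 2)` is a weighted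
count of closed `±1` walks on `{0, …, k - 1}`, the edge `{l, l + 1}` weighing `√((l + 1) / k)`.
A walk of length `2n` started at `i` only meets weights close to `√(i / k)`, so
`(1 / k) ∑ⱼ zⱼ ^ (2n)` is squeezed between Riemann sums of `C(2n, n) xⁿ` over `[0, 1]` and tends to
`C(2n, n) / (n + 1) = catalan n`, the `2n`-th moment of the semicircle law (substitute
`x = 2 sin θ`); odd moments vanish on both sides. By Gershgorin the contracted zeros lie in
`[-2, 2]`, where Weierstrass approximation passes from polynomials to continuous `φ`.
-/

open Real Topology

/-- The `(i, j)` entry of `T ^ m` for the symmetric tridiagonal operator `T` on `ℤ` with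
`T (l, l + 1) = T (l + 1, l) = w l`: the total weight of the nearest-neighbour walks of length `m`
from `i` to `j`, a walk weighing the product of the weights of the edges it crosses. -/
def walkSum (w : ℤ → ℝ) : ℕ → ℤ → ℤ → ℝ
  | 0, i, j => if i = j then 1 else 0
  | m + 1, i, j => w i * walkSum w m (i + 1) j + w (i - 1) * walkSum w m (i - 1) j

/-- The number of `±1` walks of length `t` and displacement `d`. -/
def pathCount (t : ℕ) (d : ℤ) : ℕ :=
  if 0 ≤ (t : ℤ) + d ∧ Even ((t : ℤ) + d) then t.choose (((t : ℤ) + d) / 2).toNat else 0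

theorem pathCount_succ (t : ℕ) (d : ℤ) :
    pathCount (t + 1) d = pathCount t (d - 1) + pathCount t (d + 1) := by
  unfold pathCount
  push_cast
  by_cases hd : 0 ≤ (t : ℤ) + 1 + d ∧ Even ((t : ℤ) + 1 + d)
  · obtain ⟨hpos, s, hs⟩ := hd
    rcases eq_or_ne s 0 with rfl | hs0
    · rw [if_pos ⟨by omega, 0, by omega⟩, if_neg (by omega), if_pos ⟨by omega, 0, by omega⟩]
      simp [show ((t : ℤ) + 1 + d) / 2 = 0 by omega, show ((t : ℤ) + (d + 1)) / 2 = 0 by omega]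
    · rw [if_pos ⟨by omega, s, by omega⟩, if_pos ⟨by omega, s - 1, by omega⟩,
        if_pos ⟨by omega, s, by omega⟩]
      obtain ⟨u, hu⟩ : ∃ u : ℕ, s = u + 1 := ⟨(s - 1).toNat, by omega⟩
      rw [show ((t : ℤ) + 1 + d) / 2 = u + 1 by omega, show ((t : ℤ) + (d - 1)) / 2 = u by omega,
        show ((t : ℤ) + (d + 1)) / 2 = u + 1 by omega]
      simp only [Int.toNat_natCast, show ((u : ℤ) + 1).toNat = u + 1 by omega,
        Nat.choose_succ_succ']
  · rw [if_neg hd, if_neg, if_neg] <;>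
    · rintro ⟨h0, s, hs⟩
      first
        | exact hd ⟨by omega, s + 1, by omega⟩
        | exact hd ⟨by omega, s, by omega⟩

theorem pathCount_two_mul_zero (n : ℕ) : pathCount (2 * n) 0 = n.centralBinom := by
  rw [pathCount, if_pos ⟨by omega, n, by push_cast; ring⟩, Nat.centralBinom]
  congr
  omega

theorem pathCount_two_mul_add_one_zero (n : ℕ) : pathCount (2 * n + 1) 0 = 0 :=
  if_neg fun ⟨_, s, hs⟩ => by omega

section walkSum

variable {w : ℤ → ℝ}

theorem walkSum_nonneg (hw : ∀ l, 0 ≤ w l) (m : ℕ) (i j : ℤ) : 0 ≤ walkSum w m i j := by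
  induction m generalizing i with
  | zero => unfold walkSum; positivity
  | succ m ih =>
    have := hw i; have := hw (i - 1); have := ih (i + 1); have := ih (i - 1)
    unfold walkSum; positivity

theorem walkSum_mono {v : ℤ → ℝ} (hv : ∀ l, 0 ≤ v l) {m : ℕ} {i : ℤ}
    (hvw : ∀ l, i - m ≤ l → l < i + m → v l ≤ w l) (j : ℤ) :
    walkSum v m i j ≤ walkSum w m i j := by
  induction m generalizing i with
  | zero => rfl
  | succ m ih =>
    push_cast at hvw
    have up := ih (i := i + 1) fun l h₁ h₂ => hvw l (by omega) (by omega)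
    have down := ih (i := i - 1) fun l h₁ h₂ => hvw l (by omega) (by omega)
    have hi := hvw i (by omega) (by omega)
    have hi' := hvw (i - 1) (by omega) (by omega)
    exact add_le_add (mul_le_mul hi up (walkSum_nonneg hv ..) ((hv i).trans hi))
      (mul_le_mul hi' down (walkSum_nonneg hv ..) ((hv _).trans hi'))

end walkSum

theorem walkSum_const (c : ℝ) (m : ℕ) (i j : ℤ) :
    walkSum (fun _ => c) m i j = c ^ m * pathCount m (j - i) := by
  induction m generalizing i with
  | zero =>
    rw [walkSum, pathCount]
    split_ifs <;> simp_all
    obtain ⟨hle, s, hs⟩ := ‹i ≤ j ∧ Even (j - i)›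
    rw [Nat.choose_eq_zero_of_lt (by omega), Nat.cast_zero]
  | succ m ih =>
    rw [walkSum, ih, ih, pathCount_succ, show j - i - 1 = j - (i + 1) by ring,
      show j - i + 1 = j - (i - 1) by ring]
    push_cast
    ring

def jacobiWeight (k : ℕ) (b : ℕ → ℝ) (l : ℤ) : ℝ :=
  if 0 ≤ l ∧ l + 1 < k then b l.toNat else 0

theorem Fin.sum_univ_ite_intCast_eq {k : ℕ} (c : ℤ) (G : ℤ → ℝ) :
    ∑ l : Fin k, (if ((l : ℕ) : ℤ) = c then G l else 0) = if 0 ≤ c ∧ c < k then G c else 0 := by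
  rw [Fin.sum_univ_eq_sum_range (fun l => if (l : ℤ) = c then G l else 0)]
  split_ifs with hc
  · rw [Finset.sum_eq_single c.toNat (fun l _ hl => if_neg (by omega)) (by simp; omega),
      if_pos (by omega), Int.toNat_of_nonneg hc.1]
  · exact Finset.sum_eq_zero fun l hl => if_neg (by simp at hl; omega)

theorem sum_jacobiMatrix_mul (k : ℕ) (b : ℕ → ℝ) (F : ℤ → ℝ) (i : Fin k) :
    ∑ l : Fin k, jacobiMatrix k (fun _ => 0) b i l * F l =
      jacobiWeight k b i * F (i + 1) + jacobiWeight k b (i - 1) * F (i - 1) := by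
  have hrow : ∀ l : Fin k, jacobiMatrix k (fun _ => 0) b i l * F l =
      (if ((l : ℕ) : ℤ) = i + 1 then jacobiWeight k b i * F l else 0) +
        (if ((l : ℕ) : ℤ) = i - 1 then jacobiWeight k b (i - 1) * F l else 0) := by
    intro l
    have := l.isLt
    simp only [jacobiMatrix, jacobiWeight, Matrix.of_apply]
    split_ifs <;> first | omega | (simp only [zero_add]; congr 2; omega) | simp
  rw [Finset.sum_congr rfl fun l _ => hrow l, Finset.sum_add_distrib,
    Fin.sum_univ_ite_intCast_eq (i + 1) fun z => jacobiWeight k b i * F z,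
    Fin.sum_univ_ite_intCast_eq (i - 1) fun z => jacobiWeight k b (i - 1) * F z]
  unfold jacobiWeight
  split_ifs <;> first | omega | simp

theorem jacobiMatrix_pow_apply_s18 (k : ℕ) (b : ℕ → ℝ) (m : ℕ) (i j : Fin k) :
    (jacobiMatrix k (fun _ => 0) b ^ m) i j = walkSum (jacobiWeight k b) m i j := by
  induction m generalizing i with
  | zero => simp [walkSum, Matrix.one_apply, Fin.val_inj]
  | succ m ih =>
    rw [pow_succ', Matrix.mul_apply, walkSum]
    simp_rw [ih]
    exact sum_jacobiMatrix_mul k b (fun l => walkSum (jacobiWeight k b) m l j) i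

theorem smul_jacobiMatrix (c : ℝ) (k : ℕ) (a b : ℕ → ℝ) :
    c • jacobiMatrix k a b = jacobiMatrix k (c • a) (c • b) := by
  ext i j
  simp only [jacobiMatrix, Matrix.smul_apply, Matrix.of_apply, Pi.smul_apply]
  split_ifs <;> simp

theorem Matrix.IsHermitian.trace_pow {𝕜 n : Type*} [RCLike 𝕜] [Fintype n] [DecidableEq n]
    {A : Matrix n n 𝕜} (hA : A.IsHermitian) (m : ℕ) :
    (A ^ m).trace = ∑ i, (hA.eigenvalues i : 𝕜) ^ m := by
  conv_lhs => rw [hA.spectral_theorem, ← map_pow, Unitary.conjStarAlgAut_apply,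
    Matrix.trace_mul_cycle, Unitary.coe_star_mul_self, Matrix.one_mul, Matrix.diagonal_pow,
    Matrix.trace_diagonal]
  simp

theorem abs_eigenvalues_jacobiMatrix_le {k : ℕ} {a b : ℕ → ℝ} {A B : ℝ}
    (ha : ∀ i < k, |a i| ≤ A) (hB : 0 ≤ B) (hb : ∀ i, i + 1 < k → |b i| ≤ B) (j : Fin k) :
    |(jacobiMatrix_isHermitian k a b).eigenvalues j| ≤ A + 2 * B := by
  set J := jacobiMatrix k a b
  have hJ : Module.End.HasEigenvalue (Matrix.toLin' J)
      ((jacobiMatrix_isHermitian k a b).eigenvalues j) := by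
    rw [Module.End.hasEigenvalue_iff_mem_spectrum, Matrix.spectrum_toLin']
    exact (jacobiMatrix_isHermitian k a b).eigenvalues_mem_spectrum_real j
  obtain ⟨i, hi⟩ := eigenvalue_mem_ball hJ
  rw [Metric.mem_closedBall, Real.dist_eq] at hi
  have hdiag : |J i i| ≤ A := by simpa [J, jacobiMatrix] using ha i i.isLt
  have hentry : ∀ l ∈ Finset.univ.erase i, ‖J i l‖ ≤
      (if ((l : ℕ) : ℤ) = i + 1 then B else 0) + (if ((l : ℕ) : ℤ) = i - 1 then B else 0) := by
    intro l hl
    have hli : (l : ℕ) ≠ i := fun h => (Finset.mem_erase.1 hl).1 (Fin.ext h)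
    have := l.isLt
    have := i.isLt
    simp only [J, jacobiMatrix, Matrix.of_apply, Real.norm_eq_abs]
    split_ifs <;> simp <;> first | omega | exact hb _ (by omega)
  have hrow : ∑ l ∈ Finset.univ.erase i, ‖J i l‖ ≤ 2 * B := by
    calc ∑ l ∈ Finset.univ.erase i, ‖J i l‖
        ≤ ∑ l : Fin k, ((if ((l : ℕ) : ℤ) = i + 1 then B else 0) +
            (if ((l : ℕ) : ℤ) = i - 1 then B else 0)) :=
          (Finset.sum_le_sum hentry).trans <| Finset.sum_le_sum_of_subset_of_nonneg
            (Finset.subset_univ _) fun l _ _ => by positivity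
      _ ≤ B + B := by
          rw [Finset.sum_add_distrib, Fin.sum_univ_ite_intCast_eq _ fun _ => B,
            Fin.sum_univ_ite_intCast_eq _ fun _ => B]
          gcongr <;> split_ifs <;> simp [hB]
      _ = 2 * B := by ring
  linarith [abs_sub_abs_le_abs_sub ((jacobiMatrix_isHermitian k a b).eigenvalues j) (J i i)]

theorem pow_succ_div_le_sum_range_pow_add (n a : ℕ) :
    (a : ℝ) ^ (n + 1) / (n + 1) ≤ ∑ i ∈ Finset.range a, (i : ℝ) ^ n + (a : ℝ) ^ n := by
  have hmono : MonotoneOn (fun x : ℝ => x ^ n) (Set.Icc 0 (0 + a)) :=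
    fun x hx y _ hxy => pow_le_pow_left₀ hx.1 hxy n
  have h := hmono.integral_le_sum
  simp only [integral_pow, zero_add] at h
  calc (a : ℝ) ^ (n + 1) / (n + 1) = ((a : ℝ) ^ (n + 1) - 0 ^ (n + 1)) / (n + 1) := by simp
    _ ≤ ∑ i ∈ Finset.range a, ((i + 1 : ℕ) : ℝ) ^ n := h
    _ ≤ ∑ i ∈ Finset.range (a + 1), (i : ℝ) ^ n := by
        rw [Finset.sum_range_succ' _ a, Nat.cast_zero]
        linarith [pow_nonneg (le_refl (0 : ℝ)) n]
    _ = _ := Finset.sum_range_succ _ a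

theorem sum_range_pow_le_pow_succ_div (n a : ℕ) :
    ∑ i ∈ Finset.range a, (i : ℝ) ^ n ≤ (a : ℝ) ^ (n + 1) / (n + 1) := by
  have hmono : MonotoneOn (fun x : ℝ => x ^ n) (Set.Icc 0 (0 + a)) :=
    fun x hx y _ hxy => pow_le_pow_left₀ hx.1 hxy n
  simpa [integral_pow] using hmono.sum_le_integral

theorem tendsto_sum_range_pow_div_pow (n : ℕ) :
    Tendsto (fun a : ℕ => (∑ i ∈ Finset.range a, (i : ℝ) ^ n) / (a : ℝ) ^ (n + 1)) atTop
      (𝓝 (1 / (n + 1))) := by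
  refine tendsto_of_tendsto_of_tendsto_of_le_of_le' (g := fun a : ℕ => 1 / (n + 1) - 1 / (a : ℝ))
    (by simpa using tendsto_one_div_atTop_nhds_zero_nat.const_sub (1 / ((n : ℝ) + 1)))
    tendsto_const_nhds ?_ ?_
  all_goals
    filter_upwards [eventually_gt_atTop 0] with a ha
    have ha' : (0 : ℝ) < a := by exact_mod_cast ha
  · have := pow_succ_div_le_sum_range_pow_add n a
    rw [le_div_iff₀ (by positivity)]
    calc (1 / (n + 1) - 1 / (a : ℝ)) * a ^ (n + 1) = (a : ℝ) ^ (n + 1) / (n + 1) - a ^ n := by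
          field_simp
          ring
      _ ≤ _ := by linarith
  · rw [div_le_iff₀ (by positivity), one_div_mul_eq_div]
    exact sum_range_pow_le_pow_succ_div n a

theorem tendsto_sum_range_pow_div_pow_of_tendsto {a : ℕ → ℕ}
    (ha : Tendsto (fun k => (a k : ℝ) / k) atTop (𝓝 1)) (n : ℕ) :
    Tendsto (fun k : ℕ => (∑ i ∈ Finset.range (a k), (i : ℝ) ^ n) / (k : ℝ) ^ (n + 1)) atTop
      (𝓝 (1 / (n + 1))) := by
  have ha_top : Tendsto a atTop atTop := by
    refine tendsto_natCast_atTop_iff.1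
      ((ha.pos_mul_atTop one_pos tendsto_natCast_atTop_atTop).congr' ?_)
    filter_upwards [eventually_gt_atTop 0] with k hk
    field_simp
  have := ((tendsto_sum_range_pow_div_pow n).comp ha_top).mul (ha.pow (n + 1))
  rw [one_pow, mul_one] at this
  refine this.congr' ?_
  filter_upwards [ha_top.eventually_gt_atTop 0, eventually_gt_atTop 0] with k hak hk
  simp only [Function.comp_apply, div_pow]
  field_simp

theorem tendsto_natCast_add_div (c : ℕ) :
    Tendsto (fun k : ℕ => ((k + c : ℕ) : ℝ) / k) atTop (𝓝 1) := by
  have := (tendsto_const_div_atTop_nhds_zero_nat (c : ℝ)).const_add 1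
  rw [add_zero] at this
  refine this.congr' ?_
  filter_upwards [eventually_gt_atTop 0] with k hk
  push_cast
  field_simp

theorem tendsto_natCast_sub_div (c : ℕ) :
    Tendsto (fun k : ℕ => ((k - c : ℕ) : ℝ) / k) atTop (𝓝 1) := by
  have := (tendsto_const_div_atTop_nhds_zero_nat (c : ℝ)).const_sub 1
  rw [sub_zero] at this
  refine this.congr' ?_
  filter_upwards [eventually_gt_atTop c] with k hk
  have hk0 : (k : ℝ) ≠ 0 := by exact_mod_cast (by omega : k ≠ 0)
  rw [Nat.cast_sub hk.le]
  field_simp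


theorem integral_sin_pow_add_two_neg_pi_div_two (m : ℕ) :
    ∫ θ in -(π / 2)..π / 2, sin θ ^ (m + 2) =
      (m + 1) / (m + 2) * ∫ θ in -(π / 2)..π / 2, sin θ ^ m := by
  simp [integral_sin_pow]

theorem integral_sin_pow_two_mul_neg_pi_div_two (n : ℕ) :
    ∫ θ in -(π / 2)..π / 2, sin θ ^ (2 * n) = π * n.centralBinom / 4 ^ n := by
  induction n with
  | zero => simp
  | succ n ih =>
    have hrec : ((n : ℝ) + 1) * (n + 1).centralBinom = 2 * (2 * n + 1) * n.centralBinom := by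
      exact_mod_cast Nat.succ_mul_centralBinom_succ n
    rw [show 2 * (n + 1) = 2 * n + 2 by ring, integral_sin_pow_add_two_neg_pi_div_two, ih,
      eq_div_iff (by positivity)]
    push_cast
    field_simp
    linear_combination (-2 : ℝ) * 4 ^ n * hrec

theorem integral_pow_mul_sqrt_four_sub_sq (m : ℕ) :
    ∫ x in (-2 : ℝ)..2, x ^ m * √(4 - x ^ 2) =
      2 ^ (m + 2) * ((∫ θ in -(π / 2)..π / 2, sin θ ^ m) -
        ∫ θ in -(π / 2)..π / 2, sin θ ^ (m + 2)) := by
  have hsubst := intervalIntegral.integral_deriv_smul_comp (a := -(π / 2)) (b := π / 2)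
    (f := fun θ => 2 * sin θ) (f' := fun θ => 2 * cos θ)
    (g := fun x => x ^ m * √(4 - x ^ 2))
    (fun θ _ => (hasDerivAt_sin θ).const_mul 2) (by fun_prop) (by fun_prop)
  simp only [sin_neg, sin_pi_div_two, mul_neg, mul_one] at hsubst
  rw [← hsubst, ← intervalIntegral.integral_sub, ← intervalIntegral.integral_const_mul]
  · refine intervalIntegral.integral_congr fun θ hθ => ?_
    rw [Set.uIcc_of_le (by linarith [pi_pos])] at hθ
    have hcos : √(4 - (2 * sin θ) ^ 2) = 2 * cos θ := by
      rw [show 4 - (2 * sin θ) ^ 2 = (2 * cos θ) ^ 2 by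
          linear_combination (-4) * sin_sq_add_cos_sq θ, Real.sqrt_sq (by linarith [cos_nonneg_of_mem_Icc hθ])]
    simp only [Function.comp_apply, smul_eq_mul, hcos]
    linear_combination 2 ^ (m + 2) * sin θ ^ m * sin_sq_add_cos_sq θ
  all_goals exact (continuous_sin.pow _).intervalIntegrable _ _

theorem integral_pow_two_mul_mul_sqrt_four_sub_sq (n : ℕ) :
    ∫ x in (-2 : ℝ)..2, x ^ (2 * n) * √(4 - x ^ 2) = 2 * π * catalan n := by
  have hcatalan : ((n : ℝ) + 1) * catalan n = n.centralBinom := by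
    exact_mod_cast succ_mul_catalan_eq_centralBinom n
  rw [integral_pow_mul_sqrt_four_sub_sq, integral_sin_pow_add_two_neg_pi_div_two,
    integral_sin_pow_two_mul_neg_pi_div_two, ← hcatalan, pow_add, pow_mul]
  push_cast
  field_simp
  ring

theorem integral_pow_two_mul_add_one_mul_sqrt_four_sub_sq (n : ℕ) :
    ∫ x in (-2 : ℝ)..2, x ^ (2 * n + 1) * √(4 - x ^ 2) = 0 := by
  have hodd := intervalIntegral.integral_comp_neg (a := -2) (b := 2)
    fun x : ℝ => x ^ (2 * n + 1) * √(4 - x ^ 2)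
  simp only [neg_neg, Odd.neg_pow (odd_two_mul_add_one n), neg_sq, neg_mul,
    intervalIntegral.integral_neg] at hodd
  linarith

theorem tendsto_of_forall_approx {α : Type*} {l : Filter α} {u : α → ℝ} {L : ℝ}
    (h : ∀ ε > 0, ∃ (v : α → ℝ) (L' : ℝ), Tendsto v l (𝓝 L') ∧ (∀ x, |u x - v x| ≤ ε) ∧
      |L - L'| ≤ ε) :
    Tendsto u l (𝓝 L) := by
  refine Metric.tendsto_nhds.2 fun ε hε => ?_
  obtain ⟨v, L', hv, huv, hL⟩ := h (ε / 3) (by positivity)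
  filter_upwards [Metric.tendsto_nhds.1 hv (ε / 3) (by positivity)] with x hx
  rw [Real.dist_eq] at hx ⊢
  calc |u x - L| ≤ |u x - v x| + |v x - L'| + |L - L'| := by
        linarith [abs_sub_le (u x) (v x) L, abs_sub_le (v x) L' L, abs_sub_comm L L']
    _ < ε := by linarith [huv x]

theorem abs_average_sub_average_le {k : ℕ} {f g : Fin k → ℝ} {δ : ℝ} (hδ : 0 ≤ δ)
    (h : ∀ j, |f j - g j| ≤ δ) :
    |(1 / (k : ℝ)) * ∑ j, f j - (1 / (k : ℝ)) * ∑ j, g j| ≤ δ := by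
  rw [← mul_sub, ← Finset.sum_sub_distrib, abs_mul]
  rcases k.eq_zero_or_pos with rfl | hk
  · simpa using hδ
  calc |1 / (k : ℝ)| * |∑ j, (f j - g j)| ≤ |1 / (k : ℝ)| * (k * δ) := by
        gcongr
        refine (Finset.abs_sum_le_sum_abs _ _).trans ?_
        exact (Finset.sum_le_sum fun j _ => h j).trans_eq (by simp)
    _ = δ := by
        rw [abs_of_pos (by positivity)]
        field_simp

section Moments

variable {a b : ℝ} {ρ : ℝ → ℝ} {x : (k : ℕ) → Fin k → ℝ}

theorem tendsto_average_polynomial_of_tendsto_moments (hρ : IntervalIntegrable ρ volume a b)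
    (hmom : ∀ m : ℕ, Tendsto (fun k : ℕ => (1 / (k : ℝ)) * ∑ j, x k j ^ m) atTop
      (𝓝 (∫ t in a..b, t ^ m * ρ t)))
    (p : Polynomial ℝ) :
    Tendsto (fun k : ℕ => (1 / (k : ℝ)) * ∑ j, p.eval (x k j)) atTop
      (𝓝 (∫ t in a..b, p.eval t * ρ t)) := by
  have hint : ∫ t in a..b, p.eval t * ρ t =
      ∑ m ∈ Finset.range (p.natDegree + 1), p.coeff m * ∫ t in a..b, t ^ m * ρ t := by
    simp_rw [Polynomial.eval_eq_sum_range, Finset.sum_mul, ← intervalIntegral.integral_const_mul,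
      mul_assoc]
    exact intervalIntegral.integral_finsetSum fun m _ =>
      (hρ.continuousOn_mul (by fun_prop)).const_mul _
  have havg : ∀ k : ℕ, (1 / (k : ℝ)) * ∑ j, p.eval (x k j) =
      ∑ m ∈ Finset.range (p.natDegree + 1), p.coeff m * ((1 / (k : ℝ)) * ∑ j, x k j ^ m) := by
    intro k
    simp_rw [Polynomial.eval_eq_sum_range, Finset.mul_sum]
    rw [Finset.sum_comm]
    exact Finset.sum_congr rfl fun m _ => Finset.sum_congr rfl fun j _ => by ring
  simp_rw [hint, havg]
  exact tendsto_finsetSum _ fun m _ => (hmom m).const_mul _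

theorem tendsto_average_of_tendsto_moments (hab : a ≤ b) (hρ : IntervalIntegrable ρ volume a b)
    (hx : ∀ k j, x k j ∈ Set.Icc a b)
    (hmom : ∀ m : ℕ, Tendsto (fun k : ℕ => (1 / (k : ℝ)) * ∑ j, x k j ^ m) atTop
      (𝓝 (∫ t in a..b, t ^ m * ρ t)))
    {φ : ℝ → ℝ} (hφ : ContinuousOn φ (Set.Icc a b)) :
    Tendsto (fun k : ℕ => (1 / (k : ℝ)) * ∑ j, φ (x k j)) atTop
      (𝓝 (∫ t in a..b, φ t * ρ t)) := by
  refine tendsto_of_forall_approx fun ε hε => ?_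
  set R := ∫ t in a..b, |ρ t|
  have hR : 0 ≤ R := intervalIntegral.integral_nonneg hab fun t _ => abs_nonneg _
  set δ := ε / (R + 1)
  have hδ : 0 < δ := by positivity
  obtain ⟨p, hp⟩ := exists_polynomial_near_of_continuousOn a b φ hφ δ hδ
  refine ⟨_, _, tendsto_average_polynomial_of_tendsto_moments hρ hmom p, fun k => ?_, ?_⟩
  · exact (abs_average_sub_average_le hδ.le fun j =>
      (abs_sub_comm _ _).trans_le (hp _ (hx k j)).le).trans (div_le_self hε.le (by linarith))
  · have hφρ : IntervalIntegrable (fun t => φ t * ρ t) volume a b :=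
      hρ.continuousOn_mul (by rwa [Set.uIcc_of_le hab])
    have hpρ : IntervalIntegrable (fun t => p.eval t * ρ t) volume a b :=
      hρ.continuousOn_mul (by fun_prop)
    rw [← intervalIntegral.integral_sub hφρ hpρ, ← Real.norm_eq_abs]
    calc ‖∫ t in a..b, (φ t * ρ t - p.eval t * ρ t)‖ ≤ ∫ t in a..b, δ * |ρ t| := by
          refine intervalIntegral.norm_integral_le_of_norm_le hab
            (Eventually.of_forall fun t ht => ?_) (hρ.abs.const_mul δ)
          simp only [← sub_mul, norm_mul, Real.norm_eq_abs, abs_sub_comm (φ t)]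
          gcongr
          exact (hp t (Set.Ioc_subset_Icc_self ht)).le
      _ = δ * R := intervalIntegral.integral_const_mul δ _
      _ ≤ ε := by
          rw [div_mul_eq_mul_div, div_le_iff₀ (by linarith)]
          nlinarith

end Moments

def contractedHermiteZero (k : ℕ) (j : Fin k) : ℝ :=
  (jacobiMatrix_isHermitian k (fun _ => 0) fun i => √(((i : ℝ) + 1) / 2)).eigenvalues j /
    √((k : ℝ) / 2)

theorem abs_contractedHermiteZero_le {k : ℕ} (j : Fin k) : |contractedHermiteZero k j| ≤ 2 := by
  have hs : 0 < √((k : ℝ) / 2) := Real.sqrt_pos.2 (by have := j.pos; positivity)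
  have hbound := abs_eigenvalues_jacobiMatrix_le (a := fun _ => 0)
    (b := fun i => √(((i : ℝ) + 1) / 2)) (A := 0) (B := √((k : ℝ) / 2))
    (by simp) (by positivity) (fun i hi => ?_) j
  · rw [contractedHermiteZero, abs_div, abs_of_pos hs, div_le_iff₀ hs]
    linarith
  · rw [abs_of_nonneg (by positivity)]
    gcongr
    exact_mod_cast hi.le

/-- The edge weights `√((l + 1) / k)` of `jacobiMatrix k 0 b / √(k / 2)` for the Hermite `b`. -/
def scaledHermiteWeight (k : ℕ) : ℤ → ℝ :=
  jacobiWeight k fun i => √(((i : ℝ) + 1) / k)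

theorem sum_contractedHermiteZero_pow (k m : ℕ) :
    ∑ j, contractedHermiteZero k j ^ m =
      ∑ i ∈ Finset.range k, walkSum (scaledHermiteWeight k) m i i := by
  set hJ := jacobiMatrix_isHermitian k (fun _ => 0) fun i => √(((i : ℝ) + 1) / 2)
  have hscale : (√((k : ℝ) / 2))⁻¹ • jacobiMatrix k (fun _ => 0) (fun i => √(((i : ℝ) + 1) / 2)) =
      jacobiMatrix k (fun _ => 0) fun i => √(((i : ℝ) + 1) / k) := by
    rw [smul_jacobiMatrix]
    congr 1
    · ext; simp
    · ext i
      rw [Pi.smul_apply, smul_eq_mul, ← Real.sqrt_inv, ← Real.sqrt_mul (by positivity)]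
      congr 1
      field_simp
  calc ∑ j, contractedHermiteZero k j ^ m
      = (√((k : ℝ) / 2))⁻¹ ^ m * ∑ j, hJ.eigenvalues j ^ m := by
        rw [Finset.mul_sum]
        refine Finset.sum_congr rfl fun j _ => ?_
        rw [contractedHermiteZero, div_eq_mul_inv, mul_pow, mul_comm]
    _ = ∑ i : Fin k, walkSum (scaledHermiteWeight k) m i i := by
        have htrace := hJ.trace_pow m
        simp only [RCLike.ofReal_real_eq_id, id] at htrace
        rw [← htrace, ← smul_eq_mul, ← Matrix.trace_smul, ← smul_pow, hscale]
        simp only [Matrix.trace, Matrix.diag_apply, jacobiMatrix_pow_apply_s18]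
        rfl
    _ = _ := Fin.sum_univ_eq_sum_range (fun i => walkSum _ m i i) k

theorem scaledHermiteWeight_nonneg (k : ℕ) (l : ℤ) : 0 ≤ scaledHermiteWeight k l := by
  unfold scaledHermiteWeight jacobiWeight
  split_ifs <;> positivity

theorem scaledHermiteWeight_le {k : ℕ} {c l : ℤ} (hl : l < c) :
    scaledHermiteWeight k l ≤ √(c / k) := by
  unfold scaledHermiteWeight jacobiWeight
  split_ifs with h
  · dsimp only
    gcongr
    exact_mod_cast (by omega : (l.toNat : ℤ) + 1 ≤ c)
  · positivity

theorem le_scaledHermiteWeight {k : ℕ} {c l : ℤ} (hc : c ≤ l) (hl : l + 1 < k) :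
    √(c / k) ≤ scaledHermiteWeight k l := by
  unfold scaledHermiteWeight jacobiWeight
  split_ifs with h
  · dsimp only
    gcongr
    exact_mod_cast (by omega : c ≤ (l.toNat : ℤ) + 1)
  · rw [Real.sqrt_eq_zero'.2 (div_nonpos_of_nonpos_of_nonneg (by exact_mod_cast (by omega))
      (Nat.cast_nonneg k))]

theorem walkSum_scaledHermiteWeight_le (k m : ℕ) (i j : ℤ) :
    walkSum (scaledHermiteWeight k) m i j ≤ √((i + m : ℤ) / k) ^ m * pathCount m (j - i) := by
  rw [← walkSum_const]
  exact walkSum_mono (scaledHermiteWeight_nonneg k) (fun l _ hl => scaledHermiteWeight_le hl) j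

-- For `i < m` the left side is `0`, `Real.sqrt` being `0` on negative numbers.
theorem le_walkSum_scaledHermiteWeight {k m : ℕ} {i : ℤ} (hi : i + m < k) (j : ℤ) :
    √((i - m : ℤ) / k) ^ m * pathCount m (j - i) ≤ walkSum (scaledHermiteWeight k) m i j := by
  rw [← walkSum_const]
  exact walkSum_mono (fun _ => Real.sqrt_nonneg _)
    (fun l hl hl' => le_scaledHermiteWeight hl (by omega)) j

theorem sum_walkSum_scaledHermiteWeight_le (k n : ℕ) :
    ∑ i ∈ Finset.range k, walkSum (scaledHermiteWeight k) (2 * n) i i ≤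
      n.centralBinom * (∑ i ∈ Finset.range (k + 2 * n), (i : ℝ) ^ n) / (k : ℝ) ^ n := by
  calc ∑ i ∈ Finset.range k, walkSum (scaledHermiteWeight k) (2 * n) i i
      ≤ ∑ i ∈ Finset.range k, n.centralBinom * (((2 * n + i : ℕ) : ℝ) ^ n / (k : ℝ) ^ n) := by
        refine Finset.sum_le_sum fun i _ => (walkSum_scaledHermiteWeight_le k (2 * n) i i).trans ?_
        rw [sub_self, pathCount_two_mul_zero, pow_mul, Real.sq_sqrt (by positivity), div_pow]
        push_cast
        rw [mul_comm, add_comm]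
    _ ≤ n.centralBinom * (∑ i ∈ Finset.range (k + 2 * n), (i : ℝ) ^ n) / (k : ℝ) ^ n := by
        rw [← Finset.mul_sum, ← Finset.sum_div, mul_div_assoc, add_comm k,
          Finset.sum_range_add]
        gcongr
        exact le_add_of_nonneg_left (Finset.sum_nonneg fun i _ => by positivity)

theorem le_sum_walkSum_scaledHermiteWeight (k n : ℕ) :
    n.centralBinom * (∑ j ∈ Finset.range (k - 4 * n), (j : ℝ) ^ n) / (k : ℝ) ^ n ≤
      ∑ i ∈ Finset.range k, walkSum (scaledHermiteWeight k) (2 * n) i i := by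
  calc n.centralBinom * (∑ j ∈ Finset.range (k - 4 * n), (j : ℝ) ^ n) / (k : ℝ) ^ n
      = ∑ j ∈ Finset.range (k - 4 * n), n.centralBinom * ((j : ℝ) ^ n / (k : ℝ) ^ n) := by
        rw [← Finset.mul_sum, ← Finset.sum_div, mul_div_assoc]
    _ ≤ ∑ j ∈ Finset.range (k - 4 * n),
          walkSum (scaledHermiteWeight k) (2 * n) (2 * n + j : ℕ) (2 * n + j : ℕ) := by
        refine Finset.sum_le_sum fun j hj => le_trans ?_
          (le_walkSum_scaledHermiteWeight (by simp at hj; omega) _)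
        rw [sub_self, pathCount_two_mul_zero]
        push_cast
        rw [add_sub_cancel_left, pow_mul, Real.sq_sqrt (by positivity), div_pow, mul_comm]
    _ ≤ ∑ i ∈ Finset.range k, walkSum (scaledHermiteWeight k) (2 * n) i i := by
        have hmap := Finset.sum_map (Finset.range (k - 4 * n)) (addLeftEmbedding (2 * n))
          fun i : ℕ => walkSum (scaledHermiteWeight k) (2 * n) i i
        simp only [addLeftEmbedding_apply] at hmap
        rw [← hmap]
        refine Finset.sum_le_sum_of_subset_of_nonneg ?_
          fun i _ _ => walkSum_nonneg (scaledHermiteWeight_nonneg k) ..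
        intro i
        simp only [Finset.mem_map, Finset.mem_range, addLeftEmbedding_apply]
        omega

theorem sum_contractedHermiteZero_pow_odd (k n : ℕ) :
    ∑ j, contractedHermiteZero k j ^ (2 * n + 1) = 0 := by
  rw [sum_contractedHermiteZero_pow]
  refine Finset.sum_eq_zero fun i _ => le_antisymm ?_
    (walkSum_nonneg (scaledHermiteWeight_nonneg k) ..)
  simpa [pathCount_two_mul_add_one_zero] using walkSum_scaledHermiteWeight_le k (2 * n + 1) i i

theorem tendsto_moment_contractedHermiteZero_even (n : ℕ) :
    Tendsto (fun k : ℕ => (1 / (k : ℝ)) * ∑ j, contractedHermiteZero k j ^ (2 * n)) atTop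
      (𝓝 (catalan n)) := by
  have hcatalan : (catalan n : ℝ) = n.centralBinom * (1 / (n + 1)) := by
    rw [← succ_mul_catalan_eq_centralBinom]
    push_cast
    field_simp
  rw [hcatalan]
  simp_rw [sum_contractedHermiteZero_pow]
  refine tendsto_of_tendsto_of_tendsto_of_le_of_le'
    ((tendsto_sum_range_pow_div_pow_of_tendsto (tendsto_natCast_sub_div (4 * n)) n).const_mul _)
    ((tendsto_sum_range_pow_div_pow_of_tendsto (tendsto_natCast_add_div (2 * n)) n).const_mul _)
    ?_ ?_
  all_goals
    filter_upwards [eventually_gt_atTop 0] with k hk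
    have hk' : (0 : ℝ) < k := by exact_mod_cast hk
    rw [pow_succ, ← div_div, mul_div_assoc', ← mul_div_assoc, one_div_mul_eq_div]
    gcongr
  · exact le_sum_walkSum_scaledHermiteWeight k n
  · exact sum_walkSum_scaledHermiteWeight_le k n

theorem tendsto_moment_contractedHermiteZero (m : ℕ) :
    Tendsto (fun k : ℕ => (1 / (k : ℝ)) * ∑ j, contractedHermiteZero k j ^ m) atTop
      (𝓝 ((1 / (2 * π)) * ∫ t in (-2 : ℝ)..2, t ^ m * √(4 - t ^ 2))) := by
  rcases Nat.even_or_odd' m with ⟨n, rfl | rfl⟩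
  · rw [integral_pow_two_mul_mul_sqrt_four_sub_sq, ← mul_assoc, one_div_mul_cancel (by positivity),
      one_mul]
    exact tendsto_moment_contractedHermiteZero_even n
  · simp only [integral_pow_two_mul_add_one_mul_sqrt_four_sub_sq, sum_contractedHermiteZero_pow_odd,
      mul_zero]
    exact tendsto_const_nhds

theorem hermite_zeros_semicircle_general (φ : ℝ → ℝ) (hφc : Continuous φ) :
    Filter.Tendsto
      (fun k : ℕ =>
        (1 / (k : ℝ)) * ∑ j : Fin k,
          φ (((jacobiMatrix_isHermitian k (fun _ => 0)
                (fun i => Real.sqrt (((i : ℝ) + 1) / 2))).eigenvalues j) /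
              Real.sqrt ((k : ℝ) / 2)))
      Filter.atTop
      (nhds ((1 / (2 * Real.pi)) * ∫ x in (-2 : ℝ)..2, φ x * Real.sqrt (4 - x ^ 2))) := by
  have hweight : ∀ f : ℝ → ℝ, ∫ t in (-2 : ℝ)..2, f t * (1 / (2 * π) * √(4 - t ^ 2)) =
      1 / (2 * π) * ∫ t in (-2 : ℝ)..2, f t * √(4 - t ^ 2) := fun f => by
    simp_rw [mul_left_comm (f _), intervalIntegral.integral_const_mul]
  have h := tendsto_average_of_tendsto_moments (by norm_num)
    (Continuous.intervalIntegrable (by fun_prop) (-2) 2)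
    (fun k j => abs_le.1 (abs_contractedHermiteZero_le j))
    (fun m => hweight _ ▸ tendsto_moment_contractedHermiteZero m) hφc.continuousOn
  rwa [hweight] at h

/-- the contracted zeros of Hermite polynomials (eigenvalues of the Jacobi matrix
with zero diagonal and off-diagonal entries `√(j/2)`) follow the Wigner semicircle law. -/
theorem hermite_zeros_semicircle (φ : ℝ → ℝ) (hφc : Continuous φ)
    (hφb : ∃ C : ℝ, ∀ x, |φ x| ≤ C) :
    Filter.Tendsto
      (fun k : ℕ =>
        (1 / (k : ℝ)) * ∑ j : Fin k,
          φ (((jacobiMatrix_isHermitian k (fun _ => 0)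
                (fun i => Real.sqrt (((i : ℝ) + 1) / 2))).eigenvalues j) /
              Real.sqrt ((k : ℝ) / 2)))
      Filter.atTop
      (nhds ((1 / (2 * Real.pi)) * ∫ x in (-2 : ℝ)..2, φ x * Real.sqrt (4 - x ^ 2))) :=
  hermite_zeros_semicircle_general φ hφc
end
end
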